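/- arXiv:1402.3239 — 7 statements merged into one kernel-verified Lean document; each statement's English description precedes it below -/
import Mathlib

section
/- For any graph G of order n and any real p ≥ 1, λ^(p)(G) ≤ (2 e(G))^(1 - 1/p), where e(G) is the number of edges of G. -/
open Finset

open scoped Classical

/-- The p-spectral radius of a graph `G`:
`λ^(p)(G) = max { 2 ∑_{{i,j}∈E(G)} x_i x_j : ∑ |x_i|^p = 1 }`,
where the quadratic form is written as `∑ i ∑ j, if G.Adj i j then x i * x j else 0`. -/

noncomputable def pSpec {V : Type*} [Fintype V] (G : SimpleGraph V) (p : ℝ) : ℝ :=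
  sSup {y : ℝ | ∃ x : V → ℝ, (∑ i, |x i| ^ p) = 1 ∧
    y = ∑ i, ∑ j, if G.Adj i j then x i * x j else 0}

/-!
Bound the quadratic form termwise by `∑_{(i,j) adjacent} |x_i| |x_j|`, a sum of `2 e(G)` terms.
Hölder's inequality against the constant weight `1` bounds it by `(2 e(G))^(1 - 1/p)` times
`(∑_{(i,j) adjacent} (|x_i| |x_j|)^p)^(1/p)`, and this last sum is at most
`(∑ |x_i|^p)^2 = 1`.
-/

theorem sum_le_card_rpow_of_sum_rpow_le_one {ι : Type*} (s : Finset ι) {f : ι → ℝ}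
    (hf : ∀ i, 0 ≤ f i) {p : ℝ} (hp : 1 ≤ p) (h : ∑ i ∈ s, f i ^ p ≤ 1) :
    ∑ i ∈ s, f i ≤ (#s : ℝ) ^ (1 - 1 / p) := by
  have holder := Real.inner_le_weight_mul_Lp_of_nonneg s hp (fun _ ↦ 1) f (fun _ ↦ zero_le_one) hf
  simp only [one_mul, sum_const, nsmul_eq_mul, mul_one] at holder
  calc ∑ i ∈ s, f i ≤ (#s : ℝ) ^ (1 - p⁻¹) * (∑ i ∈ s, f i ^ p) ^ p⁻¹ := holder
    _ ≤ (#s : ℝ) ^ (1 - p⁻¹) * 1 := by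
      gcongr
      exact Real.rpow_le_one (sum_nonneg fun i _ ↦ Real.rpow_nonneg (hf i) p) h (by positivity)
    _ = (#s : ℝ) ^ (1 - 1 / p) := by rw [mul_one, one_div]

theorem sum_mul_le_sq_sum {V : Type*} [Fintype V] (s : Finset (V × V)) {g : V → ℝ}
    (hg : ∀ i, 0 ≤ g i) : ∑ e ∈ s, g e.1 * g e.2 ≤ (∑ i, g i) ^ 2 := by
  calc ∑ e ∈ s, g e.1 * g e.2 ≤ ∑ e ∈ univ ×ˢ univ, g e.1 * g e.2 :=
        sum_le_sum_of_subset_of_nonneg (subset_univ s) fun e _ _ ↦ mul_nonneg (hg _) (hg _)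
    _ = (∑ i, g i) ^ 2 := by rw [sq, sum_mul_sum, ← sum_product']

theorem adjacency_form_le_of_sum_rpow_eq_one {V : Type*} [Fintype V] (G : SimpleGraph V) {p : ℝ} (hp : 1 ≤ p)
    {x : V → ℝ} (hx : ∑ i, |x i| ^ p = 1) :
    ∑ i, ∑ j, (if G.Adj i j then x i * x j else 0)
      ≤ (2 * (G.edgeFinset.card : ℝ)) ^ (1 - 1 / p) := by
  set A := univ.filter fun e : V × V ↦ G.Adj e.1 e.2
  have hA : (#A : ℝ) = 2 * (G.edgeFinset.card : ℝ) := by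
    exact_mod_cast G.two_mul_card_edgeFinset.symm
  have hpow : ∑ e ∈ A, (|x e.1| * |x e.2|) ^ p ≤ 1 := by
    simp_rw [Real.mul_rpow (abs_nonneg _) (abs_nonneg _)]
    simpa [hx] using sum_mul_le_sq_sum A fun i ↦ Real.rpow_nonneg (abs_nonneg (x i)) p
  calc ∑ i, ∑ j, (if G.Adj i j then x i * x j else 0) = ∑ e ∈ A, x e.1 * x e.2 := by
        rw [sum_filter, ← sum_product', univ_product_univ]
    _ ≤ ∑ e ∈ A, |x e.1| * |x e.2| :=
      sum_le_sum fun e _ ↦ (le_abs_self _).trans (abs_mul _ _).le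
    _ ≤ (#A : ℝ) ^ (1 - 1 / p) :=
      sum_le_card_rpow_of_sum_rpow_le_one A (fun e ↦ by positivity) hp hpow
    _ = (2 * (G.edgeFinset.card : ℝ)) ^ (1 - 1 / p) := by rw [hA]

theorem stmt1 {n : ℕ} (G : SimpleGraph (Fin n)) [DecidableRel G.Adj] (p : ℝ) (hp : 1 ≤ p) :
    pSpec G p ≤ (2 * (G.edgeFinset.card : ℝ)) ^ (1 - 1 / p) := by
  refine Real.sSup_le ?_ (by positivity)
  rintro y ⟨x, hx, rfl⟩
  convert adjacency_form_le_of_sum_rpow_eq_one G hp hx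
end

section
/- For any graph G of order n and real numbers p > q ≥ 1, one has λ^(q)(G) n^(2/q) ≥ λ^(p)(G) n^(2/p); that is, the function p ↦ λ^(p)(G) n^(2/p) is nonincreasing in p. -/
/-!
The quadratic form `adjForm G x` is homogeneous of degree two, so `adjForm G x ≤ λ^(q)(G) ‖x‖_q²`
for every `x`. The power-mean inequality gives `‖x‖_q ≤ n^(1/q - 1/p) ‖x‖_p` for `q ≤ p`;
taking the supremum over `‖x‖_p = 1` yields `λ^(p)(G) ≤ λ^(q)(G) n^(2/q - 2/p)`.
-/

open Finset

open scoped Classical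

variable {V : Type*} [Fintype V]

noncomputable def adjForm (G : SimpleGraph V) (x : V → ℝ) : ℝ :=
  ∑ i, ∑ j, if G.Adj i j then x i * x j else 0

noncomputable def pNorm (p : ℝ) (x : V → ℝ) : ℝ :=
  (∑ i, |x i| ^ p) ^ p⁻¹

lemma abs_le_one_of_sum_abs_rpow_eq_one {p : ℝ} (hp : 0 < p) {x : V → ℝ}
    (hx : ∑ i, |x i| ^ p = 1) (i : V) : |x i| ≤ 1 := by
  by_contra! h
  have hle : |x i| ^ p ≤ 1 :=
    hx ▸ single_le_sum (fun j _ => Real.rpow_nonneg (abs_nonneg (x j)) p) (mem_univ i)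
  exact hle.not_gt (Real.one_lt_rpow h hp)

lemma sum_abs_rpow_smul (p c : ℝ) (x : V → ℝ) :
    ∑ i, |(c • x) i| ^ p = |c| ^ p * ∑ i, |x i| ^ p := by
  simp only [Pi.smul_apply, smul_eq_mul, abs_mul,
    Real.mul_rpow (abs_nonneg _) (abs_nonneg _), mul_sum]

lemma sum_abs_rpow_pos (p : ℝ) {x : V → ℝ} (hx : x ≠ 0) :
    0 < ∑ i, |x i| ^ p := by
  obtain ⟨i, hi⟩ := Function.ne_iff.1 hx
  exact sum_pos' (fun j _ => by positivity) ⟨i, mem_univ i, Real.rpow_pos_of_pos (abs_pos.2 hi) p⟩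

lemma pNorm_pos (p : ℝ) {x : V → ℝ} (hx : x ≠ 0) : 0 < pNorm p x :=
  Real.rpow_pos_of_pos (sum_abs_rpow_pos p hx) _

lemma sum_abs_rpow_inv_pNorm_smul {p : ℝ} (hp : 0 < p) {x : V → ℝ} (hx : x ≠ 0) :
    ∑ i, |((pNorm p x)⁻¹ • x) i| ^ p = 1 := by
  have hS := sum_abs_rpow_pos p hx
  rw [sum_abs_rpow_smul, abs_of_pos (inv_pos.2 (pNorm_pos p hx)), pNorm,
    Real.inv_rpow (by positivity), Real.rpow_inv_rpow hS.le hp.ne']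
  exact inv_mul_cancel₀ hS.ne'

lemma pNorm_le_card_rpow_mul_pNorm {p q : ℝ} (hq : 0 < q) (hqp : q ≤ p) (x : V → ℝ) :
    pNorm q x ≤ (Fintype.card V : ℝ) ^ (q⁻¹ - p⁻¹) * pNorm p x := by
  have hp : 0 < p := hq.trans_le hqp
  have hN : (0 : ℝ) ≤ Fintype.card V := Nat.cast_nonneg _
  have hA : 0 ≤ ∑ i, |x i| ^ q := sum_nonneg fun j _ => by positivity
  have hB : 0 ≤ ∑ i, |x i| ^ p := sum_nonneg fun j _ => by positivity
  have hmean : (∑ i, |x i| ^ q) ^ (p / q) ≤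
      (Fintype.card V : ℝ) ^ (p / q - 1) * ∑ i, |x i| ^ p := by
    have := Real.rpow_sum_le_const_mul_sum_rpow univ (fun i => |x i| ^ q)
      ((one_le_div hq).2 hqp)
    simpa only [abs_of_nonneg (Real.rpow_nonneg (abs_nonneg _) _), ← Real.rpow_mul (abs_nonneg _),
      mul_div_cancel₀ p hq.ne', card_univ] using this
  calc pNorm q x = ((∑ i, |x i| ^ q) ^ (p / q)) ^ p⁻¹ := by
        rw [pNorm, ← Real.rpow_mul hA]; congr 1; field_simp
    _ ≤ ((Fintype.card V : ℝ) ^ (p / q - 1) * ∑ i, |x i| ^ p) ^ p⁻¹ := by gcongr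
    _ = (Fintype.card V : ℝ) ^ (q⁻¹ - p⁻¹) * pNorm p x := by
        rw [Real.mul_rpow (by positivity) hB, ← Real.rpow_mul hN, pNorm]
        congr 2; field_simp

section Graph

variable (G : SimpleGraph V)

lemma adjForm_smul (c : ℝ) (x : V → ℝ) : adjForm G (c • x) = c ^ 2 * adjForm G x := by
  simp only [adjForm, mul_sum, Pi.smul_apply, smul_eq_mul]
  refine sum_congr rfl fun i _ => sum_congr rfl fun j _ => ?_
  split_ifs <;> ring

lemma adjForm_single (v : V) : adjForm G (Pi.single v 1) = 0 := by
  refine sum_eq_zero fun i _ => sum_eq_zero fun j _ => ?_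
  by_cases hij : G.Adj i j
  · rcases eq_or_ne i v with rfl | hi
    · simp [hij, hij.ne']
    · simp [hij, hi]
  · simp [hij]

lemma adjForm_le_card_sq {x : V → ℝ} (hx : ∀ i, |x i| ≤ 1) :
    adjForm G x ≤ (Fintype.card V : ℝ) ^ 2 := by
  calc adjForm G x ≤ ∑ _i : V, ∑ _j : V, (1 : ℝ) := by
        refine sum_le_sum fun i _ => sum_le_sum fun j _ => ?_
        split_ifs
        · calc x i * x j ≤ |x i| * |x j| := (abs_mul (x i) (x j)) ▸ le_abs_self _
            _ ≤ 1 := mul_le_one₀ (hx i) (abs_nonneg _) (hx j)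
        · exact zero_le_one
    _ = (Fintype.card V : ℝ) ^ 2 := by simp [sq]

lemma bddAbove_adjForm_image {p : ℝ} (hp : 0 < p) :
    BddAbove {y : ℝ | ∃ x : V → ℝ, ∑ i, |x i| ^ p = 1 ∧ y = adjForm G x} := by
  refine ⟨(Fintype.card V : ℝ) ^ 2, ?_⟩
  rintro _ ⟨x, hx, rfl⟩
  exact adjForm_le_card_sq G (abs_le_one_of_sum_abs_rpow_eq_one hp hx)

lemma adjForm_le_pSpec {p : ℝ} (hp : 0 < p) {x : V → ℝ} (hx : ∑ i, |x i| ^ p = 1) :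
    adjForm G x ≤ pSpec G p :=
  le_csSup (bddAbove_adjForm_image G hp) ⟨x, hx, rfl⟩

lemma pSpec_le {p b : ℝ} (hb : 0 ≤ b) (h : ∀ x : V → ℝ, ∑ i, |x i| ^ p = 1 → adjForm G x ≤ b) :
    pSpec G p ≤ b :=
  Real.sSup_le (by rintro _ ⟨x, hx, rfl⟩; exact h x hx) hb

lemma pSpec_nonneg {p : ℝ} (hp : 0 < p) : 0 ≤ pSpec G p := by
  cases isEmpty_or_nonempty V with
  | inl _ =>
    refine Real.sSup_nonneg ?_
    rintro _ ⟨x, hx, -⟩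
    simp at hx
  | inr h =>
    obtain ⟨v⟩ := h
    refine Real.sSup_nonneg' ⟨0, ⟨Pi.single v 1, ?_, (adjForm_single G v).symm⟩, le_rfl⟩
    simp [Pi.single_apply, apply_ite (fun t : ℝ => |t| ^ p), Real.zero_rpow hp.ne']

lemma adjForm_le_pSpec_mul_pNorm_sq {q : ℝ} (hq : 0 < q) (x : V → ℝ) :
    adjForm G x ≤ pSpec G q * pNorm q x ^ 2 := by
  rcases eq_or_ne x 0 with rfl | hx
  · have h0 : adjForm G 0 = 0 := by simpa using adjForm_smul G 0 0
    simp [h0, pNorm, Real.zero_rpow hq.ne', Real.zero_rpow (inv_ne_zero hq.ne')]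
  have hr := (pNorm_pos q hx).ne'
  calc adjForm G x = pNorm q x ^ 2 * adjForm G ((pNorm q x)⁻¹ • x) := by
        rw [adjForm_smul, ← mul_assoc, ← mul_pow, mul_inv_cancel₀ hr, one_pow, one_mul]
    _ ≤ pNorm q x ^ 2 * pSpec G q := by
        gcongr
        exact adjForm_le_pSpec G hq (sum_abs_rpow_inv_pNorm_smul hq hx)
    _ = pSpec G q * pNorm q x ^ 2 := mul_comm _ _

theorem pSpec_mul_card_rpow_le {p q : ℝ} (hq : 0 < q) (hqp : q ≤ p) :
    pSpec G p * (Fintype.card V : ℝ) ^ (2 / p) ≤ pSpec G q * (Fintype.card V : ℝ) ^ (2 / q) := by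
  have hp : 0 < p := hq.trans_le hqp
  set N : ℝ := (Fintype.card V : ℝ)
  have hN : 0 ≤ N := Nat.cast_nonneg _
  have hbound : pSpec G p ≤ pSpec G q * (N ^ (q⁻¹ - p⁻¹)) ^ 2 := by
    refine pSpec_le G (by have := pSpec_nonneg G hq; positivity) fun x hx => ?_
    have hxp : pNorm p x = 1 := by rw [pNorm, hx, Real.one_rpow]
    calc adjForm G x ≤ pSpec G q * pNorm q x ^ 2 := adjForm_le_pSpec_mul_pNorm_sq G hq x
      _ ≤ pSpec G q * (N ^ (q⁻¹ - p⁻¹)) ^ 2 := by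
        have := pNorm_le_card_rpow_mul_pNorm hq hqp x
        rw [hxp, mul_one] at this
        gcongr
        · exact pSpec_nonneg G hq
        · exact Real.rpow_nonneg (sum_nonneg fun j _ => by positivity) _
  calc pSpec G p * N ^ (2 / p) ≤ pSpec G q * (N ^ (q⁻¹ - p⁻¹)) ^ 2 * N ^ (2 / p) := by gcongr
    _ = pSpec G q * N ^ (2 / q) := by
        rw [mul_assoc, ← Real.rpow_natCast, ← Real.rpow_mul hN, ← Real.rpow_add' hN]
        · congr 2; push_cast; ring
        · push_cast; ring_nf; positivity

end Graph

theorem stmt3 {n : ℕ} (G : SimpleGraph (Fin n)) (p q : ℝ) (hq : 1 ≤ q) (hpq : q < p) :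
    pSpec G p * (n : ℝ) ^ (2 / p) ≤ pSpec G q * (n : ℝ) ^ (2 / q) := by
  simpa using pSpec_mul_card_rpow_le G (zero_lt_one.trans_le hq) hpq.le
end

section
/- Let r ≥ 2 and p ≥ 1. If G is a K_{r+1}-free graph of order n, then λ^(p)(G) ≤ (1 - 1/r)^(1/p) (2 e(G))^(1 - 1/p). -/
open Finset

open scoped Classical

/-!
Write `Q y = y ⬝ᵥ A *ᵥ y` for the adjacency form, so that `pSpec G p` is the supremum of `Q x` over
`∑ |x i| ^ p = 1`. Hölder's inequality over the `2 e(G)` ordered adjacent pairs gives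
`Q x ≤ (2 e(G)) ^ (1 - 1/p) * Q (|x| ^ p) ^ (1/p)`, and `|x| ^ p` lies on the standard simplex, where
the Motzkin–Straus inequality `Q y ≤ 1 - 1/r` holds.

Motzkin–Straus is proved by shifting weight: for non-adjacent `a, b` the form `Q` is affine along
`y + t • (eₐ - e_b)`, so the whole weight of one of them can be moved onto the other without
decreasing `Q`. Repeating this ends with a vector supported on a clique, hence on at most `r`
vertices, and there `Q y ≤ (∑ y) ^ 2 - ∑ y ^ 2 ≤ 1 - 1/r` by Cauchy–Schwarz.
-/

namespace Matrix

variable {n R : Type*} [Fintype n] [CommRing R]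

theorem IsSymm.dotProduct_mulVec_add_smul {A : Matrix n n R} (hA : A.IsSymm) (y d : n → R)
    (t : R) :
    (y + t • d) ⬝ᵥ A *ᵥ (y + t • d) =
      y ⬝ᵥ A *ᵥ y + 2 * t * (d ⬝ᵥ A *ᵥ y) + t ^ 2 * (d ⬝ᵥ A *ᵥ d) := by
  have hsymm : y ⬝ᵥ A *ᵥ d = d ⬝ᵥ A *ᵥ y := by
    rw [dotProduct_mulVec, ← mulVec_transpose, hA.eq, dotProduct_comm]
  simp only [mulVec_add, mulVec_smul, dotProduct_add, add_dotProduct, dotProduct_smul,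
    smul_dotProduct, hsymm, smul_eq_mul]
  ring

end Matrix

open Matrix

namespace SimpleGraph

theorem IsClique.card_le_of_cliqueFree {V : Type*} {G : SimpleGraph V} {r : ℕ} {s : Finset V}
    (hs : G.IsClique s) (hG : G.CliqueFree (r + 1)) : #s ≤ r := by
  by_contra! h
  exact hG.mono h s ⟨hs, rfl⟩

variable {V : Type*} [Fintype V] (G : SimpleGraph V) [DecidableRel G.Adj]

theorem dotProduct_adjMatrix_mulVec {R : Type*} [NonAssocSemiring R] (y : V → R) :
    y ⬝ᵥ G.adjMatrix R *ᵥ y = ∑ i, ∑ j, if G.Adj i j then y i * y j else 0 := by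
  simp [dotProduct, Matrix.mulVec, adjMatrix_apply, Finset.mul_sum, mul_ite]

theorem dotProduct_adjMatrix_mulVec_le_sq_sum_sub_sum_sq {y : V → ℝ} (hy : 0 ≤ y) :
    y ⬝ᵥ G.adjMatrix ℝ *ᵥ y ≤ (∑ i, y i) ^ 2 - ∑ i, y i ^ 2 := by
  have hcomplete : (∑ i, y i) ^ 2 - ∑ i, y i ^ 2 =
      ∑ i, ∑ j, if i = j then 0 else y i * y j := by
    simp only [sq, sum_mul_sum, ← sum_sub_distrib]
    refine sum_congr rfl fun i _ => ?_
    rw [sub_eq_iff_eq_add, ← sum_erase_add _ _ (mem_univ i)]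
    simp [sum_ite, filter_ne]
  rw [hcomplete, dotProduct_adjMatrix_mulVec]
  refine sum_le_sum fun i _ => sum_le_sum fun j _ => ?_
  by_cases hij : G.Adj i j
  · simp [hij, hij.ne]
  · simp only [hij, if_false]
    split_ifs <;> first | rfl | exact mul_nonneg (hy i) (hy j)

theorem dotProduct_adjMatrix_mulVec_add_smul {R : Type*} [CommRing R] [DecidableEq V] {a b : V}
    (hnadj : ¬G.Adj a b) (y : V → R) (t : R) :
    (y + t • (Pi.single a 1 - Pi.single b 1)) ⬝ᵥ
        G.adjMatrix R *ᵥ (y + t • (Pi.single a 1 - Pi.single b 1)) =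
      y ⬝ᵥ G.adjMatrix R *ᵥ y + 2 * t * ((G.adjMatrix R *ᵥ y) a - (G.adjMatrix R *ᵥ y) b) := by
  rw [G.isSymm_adjMatrix.dotProduct_mulVec_add_smul]
  have hnadj' : ¬G.Adj b a := fun h => hnadj h.symm
  simp [sub_dotProduct, mulVec_sub, hnadj, hnadj']

theorem exists_isClique_support_le_dotProduct_adjMatrix_mulVec {y : V → ℝ} (hy : 0 ≤ y) :
    ∃ z : V → ℝ, 0 ≤ z ∧ ∑ i, z i = ∑ i, y i ∧ G.IsClique (↑({i | z i ≠ 0} : Finset V)) ∧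
      y ⬝ᵥ G.adjMatrix ℝ *ᵥ y ≤ z ⬝ᵥ G.adjMatrix ℝ *ᵥ z := by
  induction h : #({i | y i ≠ 0} : Finset V) using Nat.strong_induction_on generalizing y with
  | _ k ih =>
  by_cases hclique : G.IsClique (↑({i | y i ≠ 0} : Finset V))
  · exact ⟨y, hy, rfl, hclique, le_rfl⟩
  obtain ⟨a, ha, b, hb, hab, hnadj⟩ : ∃ a, y a ≠ 0 ∧ ∃ b, y b ≠ 0 ∧ a ≠ b ∧ ¬G.Adj a b := by
    simpa [IsClique, Set.Pairwise] using hclique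
  wlog hle : (G.adjMatrix ℝ *ᵥ y) b ≤ (G.adjMatrix ℝ *ᵥ y) a generalizing a b
  · exact this b hb a ha hab.symm (fun h => hnadj h.symm) (le_of_not_ge hle)
  set y' := y + y b • (Pi.single a 1 - Pi.single b 1) with hy'
  have hy'_apply (i : V) : y' i = if i = b then 0 else if i = a then y a + y b else y i := by
    by_cases hib : i = b
    · subst hib; simp [hy', hab.symm]
    · by_cases hia : i = a
      · subst hia; simp [hy', hib]
      · simp [hy', hia, hib]
  have hy'0 : 0 ≤ y' := by
    intro i
    rw [hy'_apply]
    split_ifs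
    exacts [le_rfl, add_nonneg (hy a) (hy b), hy i]
  have hsum : ∑ i, y' i = ∑ i, y i := by
    simp [hy', sum_add_distrib, ← mul_sum, sum_sub_distrib]
  have hsupp : ({i | y' i ≠ 0} : Finset V) ⊂ ({i | y i ≠ 0} : Finset V) := by
    refine (ssubset_iff_of_subset fun i hi => ?_).2 ⟨b, by simpa using hb, by simp [hy'_apply]⟩
    simp only [mem_filter, mem_univ, true_and, hy'_apply] at hi ⊢
    split_ifs at hi with hib hia
    exacts [absurd rfl hi, hia ▸ ha, hi]
  obtain ⟨z, hz0, hzsum, hzclique, hle'⟩ := ih _ (h ▸ card_lt_card hsupp) hy'0 rfl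
  refine ⟨z, hz0, hzsum.trans hsum, hzclique, le_trans ?_ hle'⟩
  rw [hy', G.dotProduct_adjMatrix_mulVec_add_smul hnadj]
  exact le_add_of_nonneg_right (mul_nonneg (mul_nonneg zero_le_two (hy b)) (sub_nonneg.2 hle))

theorem dotProduct_adjMatrix_mulVec_le_of_isClique_support {r : ℕ} (hG : G.CliqueFree (r + 1))
    {y : V → ℝ} (hy0 : 0 ≤ y) (hy1 : ∑ i, y i = 1)
    (hclique : G.IsClique (↑({i | y i ≠ 0} : Finset V))) :
    y ⬝ᵥ G.adjMatrix ℝ *ᵥ y ≤ 1 - 1 / r := by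
  set s : Finset V := {i | y i ≠ 0}
  have hcard : (#s : ℝ) ≤ r := by exact_mod_cast hclique.card_le_of_cliqueFree hG
  have hsq : 1 ≤ (r : ℝ) * ∑ i, y i ^ 2 := calc
    1 = (∑ i ∈ s, y i) ^ 2 := by rw [sum_filter_ne_zero, hy1, one_pow]
    _ ≤ #s * ∑ i ∈ s, y i ^ 2 := sq_sum_le_card_mul_sum_sq
    _ ≤ r * ∑ i, y i ^ 2 :=
      mul_le_mul hcard (sum_le_sum_of_subset_of_nonneg (subset_univ _) fun i _ _ => sq_nonneg _)
        (by positivity) (by positivity)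
  have hr : (0 : ℝ) < r := pos_of_mul_pos_left (one_pos.trans_le hsq) (by positivity)
  calc y ⬝ᵥ G.adjMatrix ℝ *ᵥ y ≤ (∑ i, y i) ^ 2 - ∑ i, y i ^ 2 :=
        G.dotProduct_adjMatrix_mulVec_le_sq_sum_sub_sum_sq hy0
    _ ≤ 1 - 1 / r := by
      rw [hy1, one_pow]
      exact sub_le_sub_left ((div_le_iff₀' hr).2 hsq) 1

theorem dotProduct_adjMatrix_mulVec_le_of_cliqueFree {r : ℕ} (hG : G.CliqueFree (r + 1))
    {y : V → ℝ} (hy0 : 0 ≤ y) (hy1 : ∑ i, y i = 1) :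
    y ⬝ᵥ G.adjMatrix ℝ *ᵥ y ≤ 1 - 1 / r := by
  obtain ⟨z, hz0, hzsum, hzclique, hle⟩ :=
    G.exists_isClique_support_le_dotProduct_adjMatrix_mulVec hy0
  exact hle.trans
    (G.dotProduct_adjMatrix_mulVec_le_of_isClique_support hG hz0 (hzsum.trans hy1) hzclique)

theorem dotProduct_adjMatrix_mulVec_le_rpow {p : ℝ} (hp : 1 ≤ p) (x : V → ℝ) :
    x ⬝ᵥ G.adjMatrix ℝ *ᵥ x ≤ (2 * #G.edgeFinset : ℝ) ^ (1 - 1 / p) *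
      ((fun i => |x i| ^ p) ⬝ᵥ G.adjMatrix ℝ *ᵥ fun i => |x i| ^ p) ^ (1 / p) := by
  set w : V × V → ℝ := fun z => if G.Adj z.1 z.2 then 1 else 0
  have hw0 (z : V × V) : 0 ≤ w z := by positivity
  have hform (y : V → ℝ) : y ⬝ᵥ G.adjMatrix ℝ *ᵥ y = ∑ z, w z * (y z.1 * y z.2) := by
    rw [dotProduct_adjMatrix_mulVec, Fintype.sum_prod_type]
    simp [w, ite_mul]
  have hw : ∑ z, w z = 2 * #G.edgeFinset := by
    have := G.natCast_card_dart_eq_dotProduct (α := ℝ)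
    rw [dart_card_eq_twice_card_edges, dotProduct_comm, hform] at this
    simpa using this.symm
  calc x ⬝ᵥ G.adjMatrix ℝ *ᵥ x = ∑ z, w z * (x z.1 * x z.2) := hform x
    _ ≤ ∑ z, w z * (|x z.1| * |x z.2|) := sum_le_sum fun z _ =>
      mul_le_mul_of_nonneg_left ((le_abs_self _).trans (abs_mul _ _).le) (hw0 z)
    _ ≤ (∑ z, w z) ^ (1 - p⁻¹) * (∑ z, w z * (|x z.1| * |x z.2|) ^ p) ^ p⁻¹ :=
      Real.inner_le_weight_mul_Lp_of_nonneg _ hp _ _ hw0 fun z => by positivity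
    _ = _ := by
      simp only [hw, hform, one_div, Real.mul_rpow (abs_nonneg _) (abs_nonneg _)]

end SimpleGraph

theorem stmt6_general {n : ℕ} (r : ℕ) (p : ℝ) (hp : 1 ≤ p)
    (G : SimpleGraph (Fin n)) [DecidableRel G.Adj] (hG : G.CliqueFree (r + 1)) :
    pSpec G p ≤ (1 - 1 / (r : ℝ)) ^ (1 / p) * (2 * (G.edgeFinset.card : ℝ)) ^ (1 - 1 / p) := by
  have hr : (0 : ℝ) ≤ 1 - 1 / r := by simpa using Nat.cast_inv_le_one (α := ℝ) r
  refine Real.sSup_le ?_ (by positivity)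
  rintro _ ⟨x, hx, rfl⟩
  set y : Fin n → ℝ := fun i => |x i| ^ p
  have hy0 : 0 ≤ y := fun i => by positivity
  calc _ = x ⬝ᵥ G.adjMatrix ℝ *ᵥ x := by convert (G.dotProduct_adjMatrix_mulVec x).symm
    _ ≤ (2 * #G.edgeFinset : ℝ) ^ (1 - 1 / p) * (y ⬝ᵥ G.adjMatrix ℝ *ᵥ y) ^ (1 / p) :=
      G.dotProduct_adjMatrix_mulVec_le_rpow hp x
    _ ≤ (1 - 1 / r) ^ (1 / p) * (2 * #G.edgeFinset : ℝ) ^ (1 - 1 / p) := by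
      rw [mul_comm]
      gcongr
      · exact dotProduct_nonneg_of_nonneg hy0 fun i => by
          simpa using sum_nonneg fun j _ => hy0 j
      · exact G.dotProduct_adjMatrix_mulVec_le_of_cliqueFree hG hy0 hx

theorem stmt6 {n : ℕ} (r : ℕ) (hr : 2 ≤ r) (p : ℝ) (hp : 1 ≤ p)
    (G : SimpleGraph (Fin n)) [DecidableRel G.Adj] (hG : G.CliqueFree (r + 1)) :
    pSpec G p ≤ (1 - 1 / (r : ℝ)) ^ (1 / p) * (2 * (G.edgeFinset.card : ℝ)) ^ (1 - 1 / p) :=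
  stmt6_general r p hp G hG
end

section
/- Let r ≥ 2 and p ≥ 1. If G is a K_{r+1}-free graph of order n, then λ^(p)(G) ≤ (1 - 1/r) n^(2 - 2/p). -/
/-!
For nonnegative weights `y` on a `K_{r+1}`-free graph, the Motzkin–Straus inequality
`∑_{i ~ j} y i * y j ≤ (1 - 1/r) (∑ i, y i)²` (over ordered adjacent pairs) holds. It is proved
by induction on `r`: pick a vertex `m` of maximal weighted degree and let `A` be its
neighbourhood. The pairs inside `A` form a `K_r`-free graph and are bounded by induction; every
other edge has an endpoint outside `A`, whose weighted degree is at most that of `m`, so these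
edges contribute at most `2 y(Aᶜ) y(A)`. With `a = y(A)`, `b = y(Aᶜ)` the step closes by
`(1 - 1/r) a² + 2ab ≤ (1 - 1/(r+1)) (a + b)²`.

For `∑ |x i|^p = 1`, the form at `x` is at most the form at `|x|`, and Hölder's inequality gives
`(∑ |x i|)² ≤ n^(2 - 2/p)`.
-/

open Finset

open scoped Classical

lemma one_sub_one_div_mul_sq_add_two_mul_le {r : ℝ} (hr : 0 < r) (a b : ℝ) :
    (1 - 1 / r) * a ^ 2 + 2 * b * a ≤ (1 - 1 / (r + 1)) * (a + b) ^ 2 := by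
  have key : (1 - 1 / (r + 1)) * (a + b) ^ 2 - ((1 - 1 / r) * a ^ 2 + 2 * b * a) =
      (a - r * b) ^ 2 / (r * (r + 1)) := by
    field_simp
    ring
  have : 0 ≤ (a - r * b) ^ 2 / (r * (r + 1)) := by positivity
  linarith

lemma sq_sum_abs_le_card_rpow {ι : Type*} [Fintype ι] {p : ℝ} (hp : 1 ≤ p) {x : ι → ℝ}
    (hx : ∑ i, |x i| ^ p = 1) :
    (∑ i, |x i|) ^ 2 ≤ (Fintype.card ι : ℝ) ^ (2 - 2 / p) := by
  have hp0 : 0 < p := one_pos.trans_le hp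
  have holder := Real.rpow_sum_le_const_mul_sum_rpow univ x hp
  rw [hx, mul_one, card_univ] at holder
  have hS : 0 ≤ ∑ i, |x i| := sum_nonneg fun i _ => abs_nonneg (x i)
  calc (∑ i, |x i|) ^ 2 = ((∑ i, |x i|) ^ p) ^ (2 / p) := by
        rw [← Real.rpow_mul hS, mul_div_cancel₀ _ hp0.ne', Real.rpow_two]
    _ ≤ ((Fintype.card ι : ℝ) ^ (p - 1)) ^ (2 / p) := by gcongr
    _ = (Fintype.card ι : ℝ) ^ (2 - 2 / p) := by
        rw [← Real.rpow_mul (Nat.cast_nonneg _)]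
        congr 1
        field_simp

namespace SimpleGraph

variable {V : Type*}

noncomputable def adjForm [Fintype V] (G : SimpleGraph V) (x : V → ℝ) : ℝ :=
  ∑ i, ∑ j, if G.Adj i j then x i * x j else 0

variable {G : SimpleGraph V}

lemma adjForm_induce (A : Finset V) (y : V → ℝ) :
    (G.induce (A : Set V)).adjForm (fun i => y i) =
      ∑ i ∈ A, ∑ j ∈ A, if G.Adj i j then y i * y j else 0 := by
  unfold adjForm
  rw [← sum_coe_sort A]
  refine sum_congr rfl fun i _ => ?_
  rw [← sum_coe_sort A]
  rfl

variable [Fintype V]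

lemma adjForm_le_adjForm_abs (x : V → ℝ) : G.adjForm x ≤ G.adjForm fun i => |x i| := by
  unfold adjForm
  gcongr with i _ j _
  split_ifs
  · exact (le_abs_self _).trans (abs_mul _ _).le
  · rfl

lemma adjForm_le_of_isMax_neighborSum {y : V → ℝ} (hy : ∀ i, 0 ≤ y i) {m : V}
    (hm : ∀ i, ∑ j ∈ G.neighborFinset i, y j ≤ ∑ j ∈ G.neighborFinset m, y j) :
    G.adjForm y ≤ (∑ i ∈ G.neighborFinset m, ∑ j ∈ G.neighborFinset m,
        if G.Adj i j then y i * y j else 0) +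
      2 * (∑ i ∈ (G.neighborFinset m)ᶜ, y i) * ∑ i ∈ G.neighborFinset m, y i := by
  set A := G.neighborFinset m
  set f : V → V → ℝ := fun i j => if G.Adj i j then y i * y j else 0
  have hf_nonneg : ∀ i j, 0 ≤ f i j := fun i j => by
    simp only [f]; split_ifs
    exacts [mul_nonneg (hy i) (hy j), le_rfl]
  have hf_symm : ∀ i j, f i j = f j i := fun i j => by
    simp only [f, G.adj_comm i j, mul_comm (y i)]
  have hrow : ∀ i, ∑ j, f i j ≤ y i * ∑ j ∈ A, y j := fun i => by
    calc ∑ j, f i j = y i * ∑ j ∈ G.neighborFinset i, y j := by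
          simp_rw [f, mul_sum, neighborFinset_eq_filter, sum_filter]
      _ ≤ y i * ∑ j ∈ A, y j := mul_le_mul_of_nonneg_left (hm i) (hy i)
  have hcompl : ∑ i ∈ Aᶜ, ∑ j, f i j ≤ (∑ i ∈ Aᶜ, y i) * ∑ j ∈ A, y j := by
    rw [sum_mul]
    exact sum_le_sum fun i _ => hrow i
  have hcross : ∑ i ∈ A, ∑ j ∈ Aᶜ, f i j ≤ ∑ j ∈ Aᶜ, ∑ i, f j i := by
    rw [sum_comm]
    refine sum_le_sum fun j _ => ?_
    simp_rw [hf_symm _ j]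
    exact sum_le_sum_of_subset_of_nonneg (subset_univ A) fun i _ _ => hf_nonneg j i
  calc G.adjForm y
      = ∑ i ∈ A, ∑ j ∈ A, f i j + ∑ i ∈ A, ∑ j ∈ Aᶜ, f i j + ∑ i ∈ Aᶜ, ∑ j, f i j := by
        rw [adjForm, ← sum_add_sum_compl A, ← sum_add_distrib]
        simp_rw [sum_add_sum_compl A]
        rfl
    _ ≤ _ := by linarith

theorem adjForm_le_of_cliqueFree {r : ℕ} (hr : 1 ≤ r) (hG : G.CliqueFree (r + 1)) {y : V → ℝ}
    (hy : ∀ i, 0 ≤ y i) : G.adjForm y ≤ (1 - 1 / r) * (∑ i, y i) ^ 2 := by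
  induction r, hr using Nat.le_induction generalizing V with
  | base =>
    rw [cliqueFree_two] at hG
    subst hG
    simp [adjForm]
  | succ r hr ih =>
    cases isEmpty_or_nonempty V
    · simp [adjForm]
    obtain ⟨m, -, hm⟩ :=
      exists_max_image univ (fun i => ∑ j ∈ G.neighborFinset i, y j) univ_nonempty
    set A := G.neighborFinset m
    have hA : (G.induce (A : Set V)).CliqueFree (r + 1) := by
      rw [cliqueFree_induce_iff, coe_neighborFinset]
      simpa using CliqueFreeOn.of_succ G hG.cliqueFreeOn (Set.mem_univ m)
    have hind := ih hA (y := fun i => y i) fun i => hy i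
    rw [adjForm_induce, sum_finset_coe] at hind
    have hr0 : (0 : ℝ) < r := by exact_mod_cast hr
    calc G.adjForm y ≤ _ := adjForm_le_of_isMax_neighborSum hy fun i => hm i (mem_univ i)
      _ ≤ (1 - 1 / r) * (∑ i ∈ A, y i) ^ 2 + 2 * (∑ i ∈ Aᶜ, y i) * ∑ i ∈ A, y i := by gcongr
      _ ≤ (1 - 1 / (r + 1)) * (∑ i ∈ A, y i + ∑ i ∈ Aᶜ, y i) ^ 2 :=
        one_sub_one_div_mul_sq_add_two_mul_le hr0 _ _
      _ = _ := by rw [sum_add_sum_compl A]; push_cast; rfl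

end SimpleGraph

theorem stmt7 {n : ℕ} (r : ℕ) (hr : 2 ≤ r) (p : ℝ) (hp : 1 ≤ p)
    (G : SimpleGraph (Fin n)) (hG : G.CliqueFree (r + 1)) :
    pSpec G p ≤ (1 - 1 / (r : ℝ)) * (n : ℝ) ^ (2 - 2 / p) := by
  have hr0 : (0 : ℝ) ≤ 1 - 1 / r := by
    rw [sub_nonneg, div_le_one (by positivity)]
    exact_mod_cast one_le_two.trans hr
  refine Real.sSup_le ?_ (by positivity)
  rintro _ ⟨x, hx, rfl⟩
  calc G.adjForm x ≤ G.adjForm fun i => |x i| := G.adjForm_le_adjForm_abs x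
    _ ≤ (1 - 1 / r) * (∑ i, |x i|) ^ 2 :=
      G.adjForm_le_of_cliqueFree (by omega) hG fun i => abs_nonneg (x i)
    _ ≤ (1 - 1 / r) * (n : ℝ) ^ (2 - 2 / p) := by
      grw [sq_sum_abs_le_card_rpow hp hx, Fintype.card_fin]
end

section
/- Let p ≥ 1, let G be a K_{r+1}-free graph on vertex set V, let x : V → ℝ_{≥0}, and for v ∈ V set D_G(v,x) = ∑_{i ∈ Γ_G(v)} x_i. Then there exists a complete r-partite graph H with V(H) = V such that D_H(v,x) ≥ D_G(v,x) for every v ∈ V. -/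
/-!
Erdős' degree-majorization argument, by induction on `r`. Pick a vertex `u` of maximum weighted
degree in `G[S]`; its neighbourhood `T` in `S` spans no `K_r`, so by induction a complete
`(r-1)`-partite graph on `T` dominates `G[T]`. Adding `S \ T` as one more part dominates `G[S]`:
a vertex outside `T` now sees all of `T`, which weighs as much as the largest neighbourhood in
`G[S]`, and a vertex in `T` sees all of `S \ T` in addition to what it saw inside `T`.
-/

open Finset

open scoped Classical

namespace SimpleGraph

variable {V : Type*} [DecidableEq V] (G : SimpleGraph V) [DecidableRel G.Adj] [Fintype V]

/-- The complete multipartite graph on `S` whose parts are the fibres of `f` has, at every vertex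
of `S`, `x`-weighted degree at least that of `G.induce S`. -/
def MultipartiteMajorizesOn {α : Type*} [DecidableEq α] (x : V → ℝ) (S : Finset V)
    (f : V → α) : Prop :=
  ∀ v ∈ S, ∑ i ∈ G.neighborFinset v ∩ S, x i ≤ ∑ i ∈ S with f i ≠ f v, x i

variable {G} {x : V → ℝ} {S : Finset V}

theorem multipartiteMajorizesOn_of_cliqueFreeOn_two {α : Type*} [DecidableEq α] (hx : 0 ≤ x)
    (hS : G.CliqueFreeOn S 2) (f : V → α) : G.MultipartiteMajorizesOn x S f := by
  intro v hv
  have hindep : G.neighborFinset v ∩ S = ∅ :=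
    eq_empty_of_forall_notMem fun i hi => by
      rw [mem_inter, mem_neighborFinset] at hi
      exact (cliqueFreeOn_two G).1 hS hv hi.2 (G.ne_of_adj hi.1) hi.1
  rw [hindep, sum_empty]
  exact sum_nonneg fun i _ => hx i

theorem MultipartiteMajorizesOn.extend {r : ℕ} {u : V} (hx : 0 ≤ x)
    (hmax : ∀ v ∈ S,
      ∑ i ∈ G.neighborFinset v ∩ S, x i ≤ ∑ i ∈ G.neighborFinset u ∩ S, x i)
    {f : V → Fin r} (hf : G.MultipartiteMajorizesOn x (G.neighborFinset u ∩ S) f) :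
    G.MultipartiteMajorizesOn x S
      (fun v => if v ∈ G.neighborFinset u ∩ S then (f v).succ else 0) := by
  set T := G.neighborFinset u ∩ S
  set g : V → Fin (r + 1) := fun v => if v ∈ T then (f v).succ else 0 with hg
  have hTS : T ⊆ S := inter_subset_right
  intro v hv
  by_cases hvT : v ∈ T
  · have hparts : {i ∈ S | g i ≠ g v} = (S \ T) ∪ {i ∈ T | f i ≠ f v} := by
      ext i
      by_cases hiT : i ∈ T
      · simp [hg, hvT, hiT, hTS hiT]
      · simp [hg, hvT, hiT, (Fin.succ_ne_zero _).symm]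
    have hnbhd : (G.neighborFinset v ∩ S) ∩ T = G.neighborFinset v ∩ T := by
      rw [inter_assoc, inter_eq_right.2 hTS]
    rw [hparts, sum_union (disjoint_sdiff_self_left.mono_right (filter_subset _ _)),
      ← sum_inter_add_sum_sdiff _ T, hnbhd]
    have houter : ∑ i ∈ (G.neighborFinset v ∩ S) \ T, x i ≤ ∑ i ∈ S \ T, x i :=
      sum_le_sum_of_subset_of_nonneg (sdiff_subset_sdiff inter_subset_right le_rfl)
        fun i _ _ => hx i
    linarith [hf v hvT]
  · -- `v` lies in the part of colour `0`, whose complement in `S` is the neighbourhood of `u`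
    have hparts : {i ∈ S | g i ≠ g v} = T := by
      ext i
      by_cases hiT : i ∈ T
      · simp [hg, hvT, hiT, hTS hiT]
      · simp [hg, hvT, hiT]
    rw [hparts]
    exact hmax v hv

theorem exists_multipartiteMajorizesOn (hx : 0 ≤ x) (r : ℕ) (S : Finset V)
    (hS : G.CliqueFreeOn S (r + 2)) :
    ∃ f : V → Fin (r + 1), G.MultipartiteMajorizesOn x S f := by
  induction r generalizing S with
  | zero => exact ⟨0, multipartiteMajorizesOn_of_cliqueFreeOn_two hx hS 0⟩
  | succ r ih =>
    rcases S.eq_empty_or_nonempty with rfl | hSne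
    · exact ⟨0, by simp [MultipartiteMajorizesOn]⟩
    obtain ⟨u, hu, hmax⟩ :=
      S.exists_max_image (fun v => ∑ i ∈ G.neighborFinset v ∩ S, x i) hSne
    have hT : G.CliqueFreeOn ↑(G.neighborFinset u ∩ S) (r + 2) := by
      rw [coe_inter, coe_neighborFinset, Set.inter_comm]
      exact CliqueFreeOn.of_succ G hS hu
    obtain ⟨f, hf⟩ := ih _ hT
    exact ⟨_, hf.extend hx hmax⟩

end SimpleGraph

theorem stmt13_general {V : Type*} [Fintype V] (r : ℕ)
    (G : SimpleGraph V) [DecidableRel G.Adj] (hG : G.CliqueFree (r + 1))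
    (x : V → ℝ) (hx : ∀ v, 0 ≤ x v) :
    ∃ f : V → Fin r, ∀ v,
      ∑ i ∈ G.neighborFinset v, x i ≤ ∑ i ∈ Finset.univ.filter (fun i => f i ≠ f v), x i := by
  cases r with
  | zero =>
    have : IsEmpty V := SimpleGraph.cliqueFree_one.1 hG
    exact ⟨isEmptyElim, isEmptyElim⟩
  | succ r =>
    obtain ⟨f, hf⟩ := G.exists_multipartiteMajorizesOn hx r univ hG.cliqueFreeOn
    exact ⟨f, fun v => by simpa only [inter_univ] using hf v (mem_univ v)⟩

theorem stmt13 {V : Type*} [Fintype V] [DecidableEq V] (r : ℕ) (hr : 1 ≤ r) (p : ℝ) (hp : 1 ≤ p)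
    (G : SimpleGraph V) [DecidableRel G.Adj] (hG : G.CliqueFree (r + 1))
    (x : V → ℝ) (hx : ∀ v, 0 ≤ x v) :
    ∃ f : V → Fin r, ∀ v,
      ∑ i ∈ G.neighborFinset v, x i ≤ ∑ i ∈ Finset.univ.filter (fun i => f i ≠ f v), x i :=
  stmt13_general r G hG x hx
end

section
/- Let 1 < p ≤ 2, 0 < γ < A < 1, R ≥ 0 and n ≥ 4R/γ. Let G be a graph of order n with λ^(p)(G) n^(2/p-1) > A n - R/n and δ(G) < (A - γ) n. If x = [x_i] is a nonnegative unit eigenvector to λ^(p)(G) (so ∑ x_i^p = 1 and the eigenequation λ^(p)(G) x_k^(p-1) = ∑_{i ∈ Γ(k)} x_i holds for all k), then σ := min{x_1^p, ..., x_n^p} satisfies σ ≤ (1 - γ/2)/n. -/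
/-!
Suppose `σ = x u ^ p > (1 - γ/2)/n` and let `k` be a vertex of minimum degree `d < (A - γ) n`.
Then `λ x_u^(p-1) ≤ λ x_k^(p-1) = ∑_{Γ(k)} x_i`, and the power-mean inequality together with
`∑_{i ∉ Γ(k)} x_i^p ≥ (n - d) σ` gives `λ^p σ^(p-1) ≤ d^(p-1) (1 - (n - d) σ)`.
In the rescaled quantities `Λ = λ n^(2/p-2) > A - γ/4` (this is where `n ≥ 4R/γ` enters),
`s = n σ ≥ 1 - γ/2` and `δ = d/n ≤ A - γ` the bound reads `Λ^p s^(p-1) ≤ δ^(p-1) (1 - (1 - δ) s)`,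
which forces `e^p b^(p-1) < a^(p-1) c` for `a = A - γ`, `b = 1 - γ/2`, `c = 1 - (1 - a) b`,
`e = A - γ/4`. For `1 < p ≤ 2` this is false, since `a^(p-1) c = (a c)^(p-1) c^(2-p)`
interpolates between `a c < e^2 b` and `c ≤ e`.
-/

open Finset

open scoped Classical

theorem Finset.sum_add_card_compl_nsmul_le {ι M : Type*} [Fintype ι] [AddCommMonoid M]
    [PartialOrder M] [IsOrderedAddMonoid M] (s : Finset ι) (f : ι → M) {m : M}
    (hm : ∀ i, m ≤ f i) : ∑ i ∈ s, f i + #sᶜ • m ≤ ∑ i, f i := by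
  rw [← sum_add_sum_compl s f]
  gcongr
  exact card_nsmul_le_sum _ _ _ fun i _ ↦ hm i

theorem SimpleGraph.rpow_mul_rpow_le_of_eigenequation {V : Type*} [Fintype V] (G : SimpleGraph V)
    [DecidableRel G.Adj] {p r : ℝ} (hp : 1 ≤ p) (hr : 0 ≤ r) (x : V → ℝ) (hx : ∀ i, 0 ≤ x i)
    (hnorm : ∑ i, x i ^ p = 1) {u k : V} (hu : ∀ i, x u ≤ x i)
    (heig : r * x k ^ (p - 1) = ∑ i ∈ G.neighborFinset k, x i) :
    r ^ p * (x u ^ p) ^ (p - 1) ≤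
      (G.degree k : ℝ) ^ (p - 1) * (1 - (Fintype.card V - G.degree k) * x u ^ p) := by
  have hxu := hx u
  have hsum :
      ∑ i ∈ G.neighborFinset k, x i ^ p ≤ 1 - (Fintype.card V - G.degree k) * x u ^ p := by
    have := (G.neighborFinset k).sum_add_card_compl_nsmul_le (fun i ↦ x i ^ p)
      fun i ↦ Real.rpow_le_rpow hxu (hu i) (by linarith)
    rw [card_compl, card_neighborFinset_eq_degree, nsmul_eq_mul,
      Nat.cast_sub (G.degree_lt_card_verts k).le, hnorm] at this
    linarith
  calc r ^ p * (x u ^ p) ^ (p - 1) = (r * x u ^ (p - 1)) ^ p := by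
        rw [Real.mul_rpow hr (by positivity), ← Real.rpow_mul hxu, ← Real.rpow_mul hxu,
          mul_comm p]
    _ ≤ (∑ i ∈ G.neighborFinset k, x i) ^ p := by
        rw [← heig]
        gcongr
        exact hu k
    _ ≤ (G.degree k : ℝ) ^ (p - 1) * ∑ i ∈ G.neighborFinset k, x i ^ p := by
        simpa only [card_neighborFinset_eq_degree] using
          Real.rpow_sum_le_const_mul_sum_rpow_of_nonneg (G.neighborFinset k) hp fun i _ ↦ hx i
    _ ≤ _ := by gcongr

theorem scaled_rpow_mul_rpow_le {p n r σ d : ℝ} (hp : 0 < p) (hn : 0 < n) (hr : 0 ≤ r)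
    (hσ : 0 ≤ σ) (hd : 0 ≤ d) (h : r ^ p * σ ^ (p - 1) ≤ d ^ (p - 1) * (1 - (n - d) * σ)) :
    (r * n ^ (2 / p - 1) / n) ^ p * (n * σ) ^ (p - 1) ≤
      (d / n) ^ (p - 1) * (1 - (1 - d / n) * (n * σ)) := by
  have hnp : (n ^ (2 / p - 1)) ^ p * n ^ (p - 1) * n ^ (p - 1) = n ^ p := by
    rw [← Real.rpow_mul hn.le, ← Real.rpow_add hn, ← Real.rpow_add hn]
    congr 1
    field_simp
    ring
  have hlhs : (r * n ^ (2 / p - 1) / n) ^ p * (n * σ) ^ (p - 1) =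
      r ^ p * σ ^ (p - 1) / n ^ (p - 1) := by
    rw [Real.div_rpow (by positivity) hn.le, Real.mul_rpow hr (by positivity),
      Real.mul_rpow hn.le hσ, ← hnp]
    field_simp
  have hrhs : (d / n) ^ (p - 1) * (1 - (1 - d / n) * (n * σ)) =
      d ^ (p - 1) * (1 - (n - d) * σ) / n ^ (p - 1) := by
    rw [Real.div_rpow hd hn.le]
    field_simp
  rw [hlhs, hrhs]
  gcongr

theorem rpow_mul_rpow_lt_of_rpow_mul_rpow_le {p a b e r s δ : ℝ} (hp : 1 < p) (he : 0 ≤ e)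
    (hb : 0 < b) (hδ0 : 0 ≤ δ) (hδ : δ ≤ a) (ha : a ≤ 1) (hr : e < r) (hs : b ≤ s)
    (h : r ^ p * s ^ (p - 1) ≤ δ ^ (p - 1) * (1 - (1 - δ) * s)) :
    e ^ p * b ^ (p - 1) < a ^ (p - 1) * (1 - (1 - a) * b) := by
  have hr0 : 0 ≤ r := he.trans hr.le
  have hlow : e ^ p * b ^ (p - 1) < r ^ p * s ^ (p - 1) := by
    calc e ^ p * b ^ (p - 1) < r ^ p * b ^ (p - 1) := by gcongr
      _ ≤ r ^ p * s ^ (p - 1) := by gcongr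
  have hM : 0 < 1 - (1 - δ) * s :=
    pos_of_mul_pos_right ((by positivity : (0:ℝ) ≤ _).trans_lt (hlow.trans_le h)) (by positivity)
  calc e ^ p * b ^ (p - 1) < δ ^ (p - 1) * (1 - (1 - δ) * s) := hlow.trans_le h
    _ ≤ a ^ (p - 1) * (1 - (1 - a) * b) := by
      have := hδ0.trans hδ
      gcongr
      nlinarith

theorem rpow_sub_one_mul_lt_rpow_mul_rpow_sub_one {a b c e p : ℝ} (ha : 0 ≤ a) (hc : 0 ≤ c)
    (hce : c ≤ e) (h : a * c < e ^ 2 * b) (hp1 : 1 < p) (hp2 : p ≤ 2) :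
    a ^ (p - 1) * c < e ^ p * b ^ (p - 1) := by
  have hac : 0 ≤ a * c := mul_nonneg ha hc
  have he : 0 < e := (hc.trans hce).lt_of_ne (by rintro rfl; simp at h; linarith)
  have hb : 0 < b := pos_of_mul_pos_right (hac.trans_lt h) (by positivity)
  calc a ^ (p - 1) * c = (a * c) ^ (p - 1) * c ^ (2 - p) := by
        rw [Real.mul_rpow ha hc, mul_assoc, ← Real.rpow_add' hc (by norm_num)]
        norm_num
    _ ≤ (a * c) ^ (p - 1) * e ^ (2 - p) := by gcongr
    _ < (e ^ 2 * b) ^ (p - 1) * e ^ (2 - p) := by gcongr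
    _ = e ^ p * b ^ (p - 1) := by
        rw [Real.mul_rpow (by positivity) hb.le, ← Real.rpow_natCast, ← Real.rpow_mul he.le,
          mul_right_comm, ← Real.rpow_add he]
        ring_nf

theorem sub_rpow_sub_one_mul_lt_rpow_mul_rpow_sub_one {p γ A : ℝ} (hp1 : 1 < p) (hp2 : p ≤ 2)
    (hγ : 0 < γ) (hγA : γ < A) (hA : A < 1) :
    (A - γ) ^ (p - 1) * (1 - (1 - (A - γ)) * (1 - γ / 2)) <
      (A - γ / 4) ^ p * (1 - γ / 2) ^ (p - 1) := by
  refine rpow_sub_one_mul_lt_rpow_mul_rpow_sub_one (by linarith) (by nlinarith) (by nlinarith) ?_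
    hp1 hp2
  nlinarith [mul_pos (mul_pos hγ hγ) (by linarith : (0 : ℝ) < 2 - γ),
    mul_nonneg (mul_nonneg hγ.le (by linarith : (0 : ℝ) ≤ A - γ))
      (by linarith : (0 : ℝ) ≤ 1 - 3 * γ / 4)]

theorem stmt17_general {n : ℕ} (G : SimpleGraph (Fin n)) [DecidableRel G.Adj]
    (p γ A R : ℝ) (hp1 : 1 < p) (hp2 : p ≤ 2)
    (hγ : 0 < γ) (hγA : γ < A) (hA : A < 1) (hn : 4 * R / γ ≤ (n : ℝ))
    (hlam : A * (n : ℝ) - R / (n : ℝ) < pSpec G p * (n : ℝ) ^ (2 / p - 1))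
    (hdel : (G.minDegree : ℝ) < (A - γ) * (n : ℝ))
    (x : Fin n → ℝ) (hxnn : ∀ i, 0 ≤ x i) (hxnorm : (∑ i, |x i| ^ p) = 1)
    (heig : ∀ k, pSpec G p * x k ^ (p - 1) = ∑ i ∈ G.neighborFinset k, x i) :
    ∀ u : Fin n, (∀ i, x u ≤ x i) → x u ^ p ≤ (1 - γ / 2) / (n : ℝ) := by
  intro u hu
  by_contra! hσ
  have hn1 : (1 : ℝ) ≤ n := Nat.one_le_cast.mpr u.pos
  have hn0 : (0 : ℝ) < n := by linarith
  have hr : (A - γ / 4) * n < pSpec G p * n ^ (2 / p - 1) := by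
    have hRn : R / n ≤ γ / 4 := by
      rw [div_le_iff₀ hγ] at hn
      rw [div_le_iff₀ hn0]
      linarith
    nlinarith
  have hr0 : 0 ≤ pSpec G p :=
    (pos_of_mul_pos_left ((mul_pos (by linarith) hn0).trans hr) (by positivity)).le
  have : Nonempty (Fin n) := ⟨u⟩
  obtain ⟨k, hk⟩ := G.exists_minimal_degree_vertex
  have hbound := G.rpow_mul_rpow_le_of_eigenequation hp1.le hr0 x hxnn
    (by simpa only [abs_of_nonneg (hxnn _)] using hxnorm) hu (heig k)
  rw [Fintype.card_fin] at hbound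
  have hscaled := scaled_rpow_mul_rpow_le (by linarith) hn0 hr0
    (Real.rpow_nonneg (hxnn u) p) (Nat.cast_nonneg _) hbound
  have hδ : (G.degree k : ℝ) / n ≤ A - γ := by
    rw [div_le_iff₀ hn0, ← hk]
    exact hdel.le
  have hΛ : A - γ / 4 < pSpec G p * n ^ (2 / p - 1) / n := by rwa [lt_div_iff₀ hn0]
  have hs : 1 - γ / 2 ≤ n * x u ^ p := by
    rw [div_lt_iff₀ hn0] at hσ
    linarith
  exact lt_asymm
    (rpow_mul_rpow_lt_of_rpow_mul_rpow_le hp1 (by linarith) (by linarith) (by positivity) hδ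
      (by linarith) hΛ hs hscaled)
    (sub_rpow_sub_one_mul_lt_rpow_mul_rpow_sub_one hp1 hp2 hγ hγA hA)

theorem stmt17 {n : ℕ} (G : SimpleGraph (Fin n)) [DecidableRel G.Adj]
    (p γ A R : ℝ) (hp1 : 1 < p) (hp2 : p ≤ 2)
    (hγ : 0 < γ) (hγA : γ < A) (hA : A < 1) (hR : 0 ≤ R) (hn : 4 * R / γ ≤ (n : ℝ))
    (hlam : A * (n : ℝ) - R / (n : ℝ) < pSpec G p * (n : ℝ) ^ (2 / p - 1))
    (hdel : (G.minDegree : ℝ) < (A - γ) * (n : ℝ))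
    (x : Fin n → ℝ) (hxnn : ∀ i, 0 ≤ x i) (hxnorm : (∑ i, |x i| ^ p) = 1)
    (hattain : (∑ i, ∑ j, if G.Adj i j then x i * x j else 0) = pSpec G p)
    (heig : ∀ k, pSpec G p * x k ^ (p - 1) = ∑ i ∈ G.neighborFinset k, x i) :
    ∀ u : Fin n, (∀ i, x u ≤ x i) → x u ^ p ≤ (1 - γ / 2) / (n : ℝ) :=
  stmt17_general G p γ A R hp1 hp2 hγ hγA hA hn hlam hdel x hxnn hxnorm heig
end

section
/- Let r ≥ 2 and let G be a graph of order n containing K_{r+1} with minimum degree δ(G) > (1 - 1/r - 1/r^4) n. Then G contains an edge that lies in more than n^(r-1)/r^(r+3) cliques of order r+1; that is, js_{r+1}(G) > n^(r-1)/r^(r+3). -/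
/-!
Write `M(w)` for the closed non-neighbourhood of `w`; the degree condition says
`|M(w)| < (1/r + 1/r⁴) n`.

If some edge `uv` has `|M(u) ∩ M(v)| ≥ 2n/r³`, grow cliques greedily from `uv`: a `k`-clique
through `uv` has at least `n (r - k)/r + n (2r - k)/r⁴` common neighbours, and each
`(k + 1)`-clique through `uv` arises from at most `k - 1` such extensions. Multiplying these
ratios for `k = 2, …, r` gives `uv` more than `n^(r-1)/r^(r+3)` cliques of order `r + 1`.

Otherwise every edge has fewer than `2n/r³` common non-neighbours, and we induct on `r` inside a
vertex set `A`. Fix an `(r + 1)`-clique `R ⊆ A`. Double counting the pairs of `R` shows that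
all but `(r + 1)|A|/r²` vertices `x ∈ A` are adjacent to all of `R` except a single vertex `w`.
The set `A ∩ N(x)` satisfies the hypotheses one level down, with the clique `R - w`. Adding `x`
to the `r`-cliques found there produces many `(r + 1)`-cliques through the edges of `R`, and
one of the `(r + 1) r` ordered edges of `R` receives at least its share.
-/

open Finset

open scoped Classical

noncomputable def deficit (s : ℕ) : ℝ := 1 / s + 1 / s ^ 4

noncomputable def cliqueBound (s : ℕ) (m : ℝ) : ℝ := m ^ (s - 1) / s ^ (s + 3)

lemma deficit_succ_le {s : ℕ} (hs : 1 ≤ s) :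
    deficit (s + 1) ≤ deficit s * (1 - deficit (s + 1)) := by
  have hx : (1 : ℝ) ≤ s := by exact_mod_cast hs
  unfold deficit
  push_cast
  rw [← sub_nonneg]
  have e : (1 / (s : ℝ) + 1 / s ^ 4) * (1 - (1 / (s + 1) + 1 / (s + 1) ^ 4)) -
      (1 / (s + 1) + 1 / (s + 1) ^ 4) =
        (2 * s ^ 3 + 3 * s ^ 2 + s - 1) / (s ^ 4 * (s + 1) ^ 4) := by
    field_simp; ring
  rw [e]
  have : (0 : ℝ) ≤ 2 * s ^ 3 + 3 * s ^ 2 + s - 1 := by nlinarith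
  positivity

lemma pow_three_le_one_sub_deficit_mul {s : ℕ} (hs : 1 ≤ s) :
    (s : ℝ) ^ 3 ≤ (1 - deficit (s + 1)) * (s + 1) ^ 3 := by
  have hx : (1 : ℝ) ≤ s := by exact_mod_cast hs
  unfold deficit
  push_cast
  rw [← sub_nonneg]
  have e : (1 - (1 / ((s : ℝ) + 1) + 1 / (s + 1) ^ 4)) * (s + 1) ^ 3 - s ^ 3 =
      2 * s ^ 2 + s - 1 / (s + 1) := by
    field_simp; ring
  have : 1 / ((s : ℝ) + 1) ≤ 1 := by rw [div_le_one (by positivity)]; linarith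
  nlinarith

lemma deficit_succ_lt_one {s : ℕ} (hs : 1 ≤ s) : deficit (s + 1) < 1 := by
  have hx : (2 : ℝ) ≤ s + 1 := by norm_cast; omega
  have h1 : 1 / ((s : ℝ) + 1) ≤ 1 / 2 := one_div_le_one_div_of_le (by norm_num) hx
  have h4 : 1 / ((s : ℝ) + 1) ^ 4 ≤ 1 / 2 ^ 4 :=
    one_div_le_one_div_of_le (by norm_num) (pow_le_pow_left₀ (by norm_num) hx 4)
  unfold deficit
  push_cast
  linarith

lemma cliqueBound_mono {s : ℕ} {m m' : ℝ} (hm : 0 ≤ m) (h : m ≤ m') :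
    cliqueBound s m ≤ cliqueBound s m' := by
  unfold cliqueBound
  gcongr

lemma add_two_mul_pow_four_lt {x m a B : ℝ} (hx : 1 ≤ x) (hm : 0 < m)
    (ha : m * (x ^ 2 + x - 1) / (x + 1) ^ 2 ≤ a) (hB : 1 - (x - 1) / ((x + 1) ^ 3 * x) ≤ B) :
    (x + 2) * m * x ^ 4 < a * B * (x + 1) ^ 5 := by
  have hx0 : 0 < x := by linarith
  have hpoly : 0 < 2 * x ^ 5 + 5 * x ^ 4 - 2 * x ^ 2 + x - 1 := by
    nlinarith [pow_le_pow_left₀ zero_le_one hx 5]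
  have hB0 : 0 ≤ 1 - (x - 1) / ((x + 1) ^ 3 * x) := by
    rw [sub_nonneg, div_le_one (by positivity)]
    nlinarith [pow_le_pow_left₀ zero_le_one hx 3]
  have : 0 ≤ x ^ 2 + x - 1 := by nlinarith
  have : 0 ≤ a := le_trans (by positivity) ha
  calc (x + 2) * m * x ^ 4
      < m * (x ^ 2 + x - 1) * ((x + 1) ^ 3 * x - x + 1) / x := by
        rw [lt_div_iff₀ hx0]
        nlinarith [mul_pos hm hpoly]
    _ = m * (x ^ 2 + x - 1) / (x + 1) ^ 2 * (1 - (x - 1) / ((x + 1) ^ 3 * x)) * (x + 1) ^ 5 := by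
        field_simp; ring
    _ ≤ a * B * (x + 1) ^ 5 := by gcongr

/-- With `x = s`, `1 - deficit (s + 1) = x / (x + 1) * (1 - η)` for `η = 1 / ((x + 1)³ x)`;
Bernoulli's inequality `(1 - η) ^ (s - 1) ≥ 1 - (s - 1) η` reduces the claim to
`add_two_mul_pow_four_lt`. -/
lemma add_two_mul_cliqueBound_succ_lt {s : ℕ} (hs : 1 ≤ s) {m a : ℝ} (hm : 0 < m)
    (ha : m - (s + 2) * m / (s + 1) ^ 2 ≤ a) :
    (s + 2) * cliqueBound (s + 1) m < a * cliqueBound s ((1 - deficit (s + 1)) * m) := by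
  obtain ⟨t, rfl⟩ : ∃ t, s = t + 1 := ⟨s - 1, by omega⟩
  set x : ℝ := t + 1 with hxdef
  have hx : 1 ≤ x := by simp [x]
  set η : ℝ := 1 / ((x + 1) ^ 3 * x)
  have hc : 1 - deficit (t + 1 + 1) = x / (x + 1) * (1 - η) := by
    simp only [η, hxdef, deficit]; push_cast; field_simp; ring
  have hbern : 1 - (x - 1) / ((x + 1) ^ 3 * x) ≤ (1 - η) ^ t := by
    have hη : η ≤ 1 := by
      rw [div_le_one (by positivity)]
      nlinarith [pow_le_pow_left₀ zero_le_one (by linarith : 1 ≤ x + 1) 3]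
    have := one_add_mul_le_pow (by linarith : -2 ≤ -η) t
    rw [show (x - 1) / ((x + 1) ^ 3 * x) = t * η by simp only [η, hxdef]; ring]
    simpa [sub_eq_add_neg] using this
  have ha' : m * (x ^ 2 + x - 1) / (x + 1) ^ 2 ≤ a := by
    convert ha using 1; simp only [hxdef]; push_cast; field_simp; ring
  rw [hc]
  unfold cliqueBound
  simp only [Nat.add_sub_cancel]
  rw [show ((t + 1 + 1 : ℕ) : ℝ) = x + 1 by simp [hxdef],
    show ((t + 1 : ℕ) : ℝ) = x by simp [hxdef]]
  have hL : (x + 2) * (m ^ (t + 1) / (x + 1) ^ (t + 1 + 1 + 3)) =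
      m ^ t / (x + 1) ^ t * ((x + 2) * m / (x + 1) ^ 5) := by
    field_simp; ring
  have hR : a * ((x / (x + 1) * (1 - η) * m) ^ t / x ^ (t + 1 + 3)) =
      m ^ t / (x + 1) ^ t * (a * (1 - η) ^ t / x ^ 4) := by
    rw [mul_pow, mul_pow, div_pow]; field_simp; ring
  rw [hL, hR]
  refine mul_lt_mul_of_pos_left ?_ (by positivity)
  rw [div_lt_div_iff₀ (by positivity) (by positivity)]
  exact add_two_mul_pow_four_lt hx hm ha' hbern

lemma Finset.card_offDiag_of_card_eq {α : Type*} [DecidableEq α] {s : Finset α} {k : ℕ}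
    (h : #s = k + 1) : #s.offDiag = (k + 1) * k := by
  rw [offDiag_card, h, ← Nat.mul_sub_one, Nat.add_sub_cancel]

namespace SimpleGraph

variable {V : Type*} {G : SimpleGraph V} [DecidableRel G.Adj]

section

variable [DecidableEq V]

variable (G) in
def cliquesThrough (A : Finset V) (u v : V) (k : ℕ) : Finset (Finset V) :=
  A.powerset.filter fun s => G.IsNClique k s ∧ u ∈ s ∧ v ∈ s

lemma mem_cliquesThrough {A s : Finset V} {u v : V} {k : ℕ} :
    s ∈ G.cliquesThrough A u v k ↔ s ⊆ A ∧ G.IsNClique k s ∧ u ∈ s ∧ v ∈ s := by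
  simp [cliquesThrough]

lemma one_le_card_cliquesThrough {A : Finset V} {u v : V} (h : G.Adj u v) (hu : u ∈ A)
    (hv : v ∈ A) : 1 ≤ #(G.cliquesThrough A u v 2) :=
  one_le_card.2 ⟨{u, v}, mem_cliquesThrough.2 ⟨by simp [insert_subset_iff, hu, hv],
    (G.isNClique_iff).2 ⟨by simpa using isClique_pair.2 fun _ ↦ h, card_pair h.ne⟩,
    by simp, by simp⟩⟩

/-- Adding `x` to a `k`-clique in `A ∩ N(x)` is injective, and every `(k + 1)`-clique through
`u, v` arises in this way from at most `k - 1` vertices `x`. -/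
lemma sum_card_cliquesThrough_filter_adj_le {A X : Finset V} {u v : V} (huv : u ≠ v) (k : ℕ)
    (hXA : X ⊆ A) :
    ∑ x ∈ X, #(G.cliquesThrough (A.filter (G.Adj x)) u v k) ≤
      (k - 1) * #(G.cliquesThrough A u v (k + 1)) := by
  let IsApex (x : V) (T : Finset V) : Prop := x ∈ T \ {u, v}
  calc ∑ x ∈ X, #(G.cliquesThrough (A.filter (G.Adj x)) u v k)
      ≤ ∑ x ∈ X, #((G.cliquesThrough A u v (k + 1)).bipartiteAbove IsApex x) := by
        refine sum_le_sum fun x hx ↦ card_le_card_of_injOn (insert x) (fun P hP ↦ ?_) ?_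
        · obtain ⟨hPA, hP, hu, hv⟩ := mem_cliquesThrough.1 hP
          have hxP : ∀ y ∈ P, G.Adj x y := fun y hy ↦ (mem_filter.1 (hPA hy)).2
          refine mem_filter.2 ⟨mem_cliquesThrough.2 ⟨insert_subset (hXA hx)
            fun y hy ↦ (mem_filter.1 (hPA hy)).1, hP.insert hxP, mem_insert_of_mem hu,
            mem_insert_of_mem hv⟩, ?_⟩
          simp only [IsApex, mem_sdiff, mem_insert_self, mem_insert, mem_singleton, true_and]
          rintro (rfl | rfl)
          exacts [G.irrefl (hxP _ hu), G.irrefl (hxP _ hv)]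
        · intro P hP P' hP' h
          have notMem : ∀ Q ∈ G.cliquesThrough (A.filter (G.Adj x)) u v k, x ∉ Q :=
            fun Q hQ hx ↦ G.irrefl (mem_filter.1 ((mem_cliquesThrough.1 hQ).1 hx)).2
          simpa [erase_insert (notMem P hP), erase_insert (notMem P' hP')] using
            congrArg (·.erase x) h
    _ = ∑ T ∈ G.cliquesThrough A u v (k + 1), #(X.bipartiteBelow IsApex T) :=
        sum_card_bipartiteAbove_eq_sum_card_bipartiteBelow _
    _ ≤ ∑ T ∈ G.cliquesThrough A u v (k + 1), (k - 1) := by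
        refine sum_le_sum fun T hT ↦ ?_
        obtain ⟨-, hT, hu, hv⟩ := mem_cliquesThrough.1 hT
        calc #(X.bipartiteBelow IsApex T) ≤ #(T \ {u, v}) :=
              card_le_card fun x hx ↦ (mem_filter.1 hx).2
          _ = k - 1 := by
              rw [card_sdiff_of_subset (insert_subset hu (singleton_subset_iff.2 hv)), hT.2,
                card_pair huv]
              omega
    _ = (k - 1) * #(G.cliquesThrough A u v (k + 1)) := by rw [sum_const, smul_eq_mul, mul_comm]

lemma card_mul_le_sum_card_cliquesThrough {A X R : Finset V} (hXA : X ⊆ A) {k : ℕ} {b : ℝ}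
    (hb : ∀ x ∈ X,
      b ≤ ∑ p ∈ R.offDiag, (#(G.cliquesThrough (A.filter (G.Adj x)) p.1 p.2 k) : ℝ)) :
    #X * b ≤ (k - 1 : ℕ) * ∑ p ∈ R.offDiag, (#(G.cliquesThrough A p.1 p.2 (k + 1)) : ℝ) := by
  calc #X * b
      ≤ ∑ x ∈ X, ∑ p ∈ R.offDiag, (#(G.cliquesThrough (A.filter (G.Adj x)) p.1 p.2 k) : ℝ) := by
        rw [← nsmul_eq_mul, ← sum_const]; exact sum_le_sum hb
    _ = ∑ p ∈ R.offDiag, ∑ x ∈ X, (#(G.cliquesThrough (A.filter (G.Adj x)) p.1 p.2 k) : ℝ) :=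
        sum_comm
    _ ≤ ∑ p ∈ R.offDiag, (k - 1 : ℕ) * (#(G.cliquesThrough A p.1 p.2 (k + 1)) : ℝ) := by
        refine sum_le_sum fun p hp ↦ ?_
        exact_mod_cast sum_card_cliquesThrough_filter_adj_le (mem_offDiag.1 hp).2.2 k hXA
    _ = _ := by rw [mul_sum]

lemma card_mul_le_card_cliquesThrough_succ [Fintype V] {u v : V} (huv : u ≠ v) {k : ℕ} {e : ℝ}
    (he : ∀ T ∈ G.cliquesThrough univ u v k,
      e ≤ #(univ.filter fun y ↦ ∀ w ∈ T, G.Adj w y)) :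
    #(G.cliquesThrough univ u v k) * e ≤
      (k - 1 : ℕ) * #(G.cliquesThrough univ u v (k + 1)) := by
  let Extends (T : Finset V) (y : V) : Prop := ∀ w ∈ T, G.Adj w y
  have hswap : ∑ T ∈ G.cliquesThrough univ u v k, #(univ.filter (Extends T)) =
      ∑ y, #(G.cliquesThrough (univ.filter (G.Adj y)) u v k) := by
    refine (sum_card_bipartiteAbove_eq_sum_card_bipartiteBelow _).trans
      (sum_congr rfl fun y _ ↦ congrArg card (ext fun T ↦ ?_))
    simp only [bipartiteBelow, mem_filter, mem_cliquesThrough, subset_iff,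
      mem_univ, true_and, implies_true]
    exact ⟨fun ⟨h, hT⟩ ↦ ⟨fun w hw ↦ (hT w hw).symm, h⟩,
      fun ⟨hT, h⟩ ↦ ⟨h, fun w hw ↦ (hT hw).symm⟩⟩
  calc #(G.cliquesThrough univ u v k) * e
      ≤ ∑ T ∈ G.cliquesThrough univ u v k, (#(univ.filter (Extends T)) : ℝ) := by
        rw [← nsmul_eq_mul, ← sum_const]; exact sum_le_sum he
    _ = ∑ y, (#(G.cliquesThrough (univ.filter (G.Adj y)) u v k) : ℝ) := by
        exact_mod_cast hswap
    _ ≤ (k - 1 : ℕ) * #(G.cliquesThrough univ u v (k + 1)) := by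
        exact_mod_cast sum_card_cliquesThrough_filter_adj_le huv k (subset_univ _)

lemma card_add_card_nonNbrs_le [Fintype V] (T : Finset V) (u v : V) :
    Fintype.card V + #(univ.filter fun y ↦ ¬G.Adj u y ∧ ¬G.Adj v y) ≤
      #(univ.filter fun y ↦ ∀ w ∈ T, G.Adj w y) + #(univ.filter (¬G.Adj u ·)) +
        #(univ.filter (¬G.Adj v ·)) + ∑ w ∈ T \ {u, v}, #(univ.filter (¬G.Adj w ·)) := by
  have hcover : (univ : Finset V) ⊆ univ.filter (fun y ↦ ∀ w ∈ T, G.Adj w y) ∪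
      (univ.filter (fun y ↦ ¬G.Adj u y ∨ ¬G.Adj v y) ∪
        (T \ {u, v}).biUnion fun w ↦ univ.filter (¬G.Adj w ·)) := by
    intro y _
    simp only [mem_union, mem_filter, mem_univ, true_and, mem_biUnion, mem_sdiff, mem_insert,
      mem_singleton]
    grind
  have hunion := card_union_add_card_inter (univ.filter (¬G.Adj u ·)) (univ.filter (¬G.Adj v ·))
  rw [← filter_or, ← filter_and] at hunion
  have hcard := card_le_card hcover
  have := card_union_le (univ.filter fun y ↦ ∀ w ∈ T, G.Adj w y)
    (univ.filter (fun y ↦ ¬G.Adj u y ∨ ¬G.Adj v y) ∪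
      (T \ {u, v}).biUnion fun w ↦ univ.filter (¬G.Adj w ·))
  have := card_union_le (univ.filter fun y ↦ ¬G.Adj u y ∨ ¬G.Adj v y)
    ((T \ {u, v}).biUnion fun w ↦ univ.filter (¬G.Adj w ·))
  have := card_biUnion_le (s := T \ {u, v}) (t := fun w ↦ univ.filter (¬G.Adj w ·))
  rw [card_univ] at hcard
  omega

lemma card_mul_le_card_cliquesThrough_succ_of_nonNbrs [Fintype V] {r : ℕ} (hr : r ≠ 0)
    (hdeg : ∀ w, (1 - deficit r) * Fintype.card V < #(univ.filter (G.Adj w)))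
    {u v : V} (huv : G.Adj u v)
    (hov : 2 * Fintype.card V / (r : ℝ) ^ 3 ≤
      #(univ.filter fun y ↦ ¬G.Adj u y ∧ ¬G.Adj v y))
    (k : ℕ) :
    #(G.cliquesThrough univ u v k) *
        (Fintype.card V * (r - k) / r + Fintype.card V * (2 * r - k) / (r : ℝ) ^ 4) ≤
      (k - 1 : ℕ) * #(G.cliquesThrough univ u v (k + 1)) := by
  have hM (w : V) : (#(univ.filter (¬G.Adj w ·)) : ℝ) ≤ deficit r * Fintype.card V := by
    have h := card_filter_add_card_filter_not (s := univ) (G.Adj w)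
    rw [card_univ] at h
    have := hdeg w
    rw [← h] at this ⊢
    push_cast at this ⊢
    linarith
  refine card_mul_le_card_cliquesThrough_succ huv.ne fun T hT ↦ ?_
  obtain ⟨-, hT, hu, hv⟩ := mem_cliquesThrough.1 hT
  have hcard : (#(T \ {u, v}) : ℝ) = k - 2 := by
    rw [card_sdiff_of_subset (insert_subset hu (singleton_subset_iff.2 hv)), hT.2,
      card_pair huv.ne]
    have : 2 ≤ k := hT.2 ▸ one_lt_card.2 ⟨u, hu, v, hv, huv.ne⟩
    push_cast [this]
    ring
  have hsum : ∑ w ∈ T \ {u, v}, (#(univ.filter (¬G.Adj w ·)) : ℝ) ≤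
      (k - 2) * (deficit r * Fintype.card V) := by
    rw [← hcard, ← nsmul_eq_mul, ← sum_const]
    exact sum_le_sum fun w _ ↦ hM w
  have hcover : (Fintype.card V : ℝ) + #(univ.filter fun y ↦ ¬G.Adj u y ∧ ¬G.Adj v y) ≤
      #(univ.filter fun y ↦ ∀ w ∈ T, G.Adj w y) + #(univ.filter (¬G.Adj u ·)) +
        #(univ.filter (¬G.Adj v ·)) +
          ∑ w ∈ T \ {u, v}, (#(univ.filter (¬G.Adj w ·)) : ℝ) := by
    exact_mod_cast card_add_card_nonNbrs_le T u v
  have e : (Fintype.card V : ℝ) * (r - k) / r + Fintype.card V * (2 * r - k) / r ^ 4 =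
      Fintype.card V + 2 * Fintype.card V / r ^ 3 - k * (deficit r * Fintype.card V) := by
    unfold deficit; field_simp; ring
  rw [e]
  linarith [hM u, hM v]

lemma pow_mul_choose_le_card_cliquesThrough [Fintype V] {r : ℕ}
    (hdeg : ∀ w, (1 - deficit r) * Fintype.card V < #(univ.filter (G.Adj w)))
    {u v : V} (huv : G.Adj u v)
    (hov : 2 * Fintype.card V / (r : ℝ) ^ 3 ≤
      #(univ.filter fun y ↦ ¬G.Adj u y ∧ ¬G.Adj v y))
    {j : ℕ} (hj : j ≤ r - 2) :
    ((Fintype.card V : ℝ) / r) ^ j * (r - 2).choose j ≤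
      #(G.cliquesThrough univ u v (j + 2)) := by
  set N : ℝ := (Fintype.card V : ℝ)
  induction j with
  | zero =>
    rw [pow_zero, Nat.choose_zero_right, Nat.cast_one, one_mul]
    exact Nat.one_le_cast.2 <| one_le_card_cliquesThrough huv (mem_univ _) (mem_univ _)
  | succ j ih =>
    have hjr : (j : ℝ) + 2 ≤ r := by exact_mod_cast (by omega : j + 2 ≤ r)
    have hpascal : ((r - 2).choose (j + 1) : ℝ) * (j + 1) = (r - 2).choose j * (r - (j + 2)) := by
      have := congrArg (Nat.cast (R := ℝ)) (Nat.choose_succ_right_eq (r - 2) j)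
      push_cast [Nat.sub_sub, Nat.cast_sub (by omega : 2 + j ≤ r)] at this
      linarith
    have hgrowth : #(G.cliquesThrough univ u v (j + 2)) * (N * (r - (j + 2)) / r) ≤
        (j + 1) * #(G.cliquesThrough univ u v (j + 3)) := by
      have h := card_mul_le_card_cliquesThrough_succ_of_nonNbrs (by omega) hdeg huv hov (j + 2)
      have : (0 : ℝ) ≤ N * (2 * r - (j + 2)) / r ^ 4 := by
        have : (0 : ℝ) ≤ 2 * r - (j + 2) := by linarith
        positivity
      push_cast at h
      nlinarith [Nat.cast_nonneg (α := ℝ) #(G.cliquesThrough univ u v (j + 2))]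
    have : 0 ≤ N * (r - (j + 2)) / r := by
      have : (0 : ℝ) ≤ r - (j + 2) := by linarith
      positivity
    refine le_of_mul_le_mul_right ?_ (by positivity : (0 : ℝ) < j + 1)
    calc (N / r) ^ (j + 1) * (r - 2).choose (j + 1) * (j + 1)
        = (N / r) ^ j * (r - 2).choose j * (N * (r - (j + 2)) / r) := by
          rw [mul_assoc, hpascal]; ring
      _ ≤ #(G.cliquesThrough univ u v (j + 2)) * (N * (r - (j + 2)) / r) := by
          gcongr; exact ih (by omega)
      _ ≤ _ := hgrowth
      _ = _ := by ring

/-- Greedy growth from the edge `uv`: the clique counts grow like `(n / r) ^ j * (r - 2).choose j`,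
and the last step, where `n (r - k) / r` vanishes, is paid for by the large common
non-neighbourhood of `u` and `v`. -/
theorem cliqueBound_lt_card_cliquesThrough_of_nonNbrs [Fintype V] {r : ℕ} (hr : 2 ≤ r)
    (hdeg : ∀ w, (1 - deficit r) * Fintype.card V < #(univ.filter (G.Adj w)))
    {u v : V} (huv : G.Adj u v)
    (hov : 2 * Fintype.card V / (r : ℝ) ^ 3 ≤
      #(univ.filter fun y ↦ ¬G.Adj u y ∧ ¬G.Adj v y)) :
    cliqueBound r (Fintype.card V) < #(G.cliquesThrough univ u v (r + 1)) := by
  have hN : (0 : ℝ) < Fintype.card V := by exact_mod_cast Fintype.card_pos_iff.2 ⟨u⟩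
  have hfirst := pow_mul_choose_le_card_cliquesThrough hdeg huv hov (le_refl (r - 2))
  have hlast := card_mul_le_card_cliquesThrough_succ_of_nonNbrs (by omega) hdeg huv hov r
  set N : ℝ := (Fintype.card V : ℝ)
  obtain ⟨t, rfl⟩ : ∃ t, r = t + 2 := ⟨r - 2, by omega⟩
  simp only [Nat.add_sub_cancel, Nat.choose_self, Nat.cast_one, mul_one] at hfirst hlast
  simp only [sub_self, mul_zero, zero_div, zero_add] at hlast
  push_cast at hfirst hlast
  have hstep : (N / (t + 2)) ^ t * (N / (t + 2) ^ 3) ≤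
      (t + 1) * #(G.cliquesThrough univ u v (t + 3)) := by
    calc (N / (t + 2)) ^ t * (N / (t + 2) ^ 3)
        ≤ #(G.cliquesThrough univ u v (t + 2)) * (N * (2 * (t + 2) - (t + 2)) / (t + 2) ^ 4) := by
          rw [show N * (2 * ((t : ℝ) + 2) - (t + 2)) / (t + 2) ^ 4 = N / (t + 2) ^ 3 by
            field_simp; ring]
          gcongr
      _ ≤ _ := hlast
  unfold cliqueBound
  rw [show t + 2 - 1 = t + 1 by omega]
  push_cast
  calc N ^ (t + 1) / (t + 2) ^ (t + 2 + 3)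
      = (N / (t + 2)) ^ t * (N / (t + 2) ^ 3) / (t + 2) ^ 2 := by
        rw [div_pow]; field_simp; ring
    _ < (N / (t + 2)) ^ t * (N / (t + 2) ^ 3) / (t + 1) := by
        gcongr; nlinarith
    _ ≤ #(G.cliquesThrough univ u v (t + 3)) := by
        rw [div_le_iff₀ (by positivity)]; linarith

end

variable (G) in
/-- The hypotheses of the induction at level `s`, relative to the vertex set `A`; the theorem's
hypotheses are those at level `r` for `A = univ`. -/
structure IsDenseAt (s : ℕ) (A : Finset V) : Prop where
  degree : ∀ v ∈ A, (1 - deficit s) * #A < #(A.filter (G.Adj v))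
  commonNonNbrs : ∀ u ∈ A, ∀ v ∈ A, G.Adj u v →
    (#(A.filter fun x ↦ ¬G.Adj u x ∧ ¬G.Adj v x) : ℝ) ≤ 2 * #A / (s : ℝ) ^ 3

lemma IsDenseAt.filter_adj {s : ℕ} (hs : 1 ≤ s) {A : Finset V} (hA : G.IsDenseAt (s + 1) A)
    {x : V} (hx : x ∈ A) : G.IsDenseAt s (A.filter (G.Adj x)) := by
  have hsub : A.filter (G.Adj x) ⊆ A := filter_subset _ _
  have hA' := hA.degree x hx
  constructor
  · intro v hv
    have hvA := hsub hv
    have hsplit := card_filter_add_card_filter_not (s := A.filter (G.Adj v)) (G.Adj x)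
    have hrest : #((A.filter (G.Adj v)).filter (¬G.Adj x ·)) ≤ #A - #(A.filter (G.Adj x)) := by
      rw [← card_filter_add_card_filter_not (s := A) (G.Adj x), Nat.add_sub_cancel_left]
      exact card_le_card (filter_subset_filter _ (filter_subset _ _))
    rw [filter_comm] at hsplit
    have hle : (#(A.filter (G.Adj v)) : ℝ) ≤
        #((A.filter (G.Adj x)).filter (G.Adj v)) + (#A - #(A.filter (G.Adj x))) := by
      rw [← Nat.cast_sub (card_le_card hsub)]
      exact_mod_cast hsplit.symm.le.trans (add_le_add_right hrest _)
    have hδ : 0 ≤ deficit s := by unfold deficit; positivity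
    nlinarith [hA.degree v hvA, mul_le_mul_of_nonneg_right (deficit_succ_le hs)
      (Nat.cast_nonneg (α := ℝ) #A), mul_le_mul_of_nonneg_left hA'.le hδ]
  · intro u hu v hv huv
    calc (#((A.filter (G.Adj x)).filter fun y ↦ ¬G.Adj u y ∧ ¬G.Adj v y) : ℝ)
        ≤ #(A.filter fun y ↦ ¬G.Adj u y ∧ ¬G.Adj v y) := by
          exact_mod_cast card_le_card (filter_subset_filter _ hsub)
      _ ≤ 2 * #A / ((s : ℝ) + 1) ^ 3 := by
          exact_mod_cast hA.commonNonNbrs u (hsub hu) v (hsub hv) huv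
      _ ≤ 2 * #(A.filter (G.Adj x)) / (s : ℝ) ^ 3 := by
          have h3 := pow_three_le_one_sub_deficit_mul hs
          rw [div_le_div_iff₀ (by positivity) (by positivity)]
          nlinarith [mul_le_mul_of_nonneg_left h3 (Nat.cast_nonneg (α := ℝ) #A),
            mul_le_mul_of_nonneg_right hA'.le (by positivity : (0 : ℝ) ≤ (s + 1) ^ 3)]

variable [DecidableEq V]

/-- A vertex of `A` missing two vertices `a ≠ b` of `R` is a common non-neighbour of the edge
`ab`, and is counted for both orderings of it. -/
lemma sub_le_card_filter_adj_all_but_one {k : ℕ} {A R : Finset V} (hA : G.IsDenseAt k A)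
    (hRA : R ⊆ A) (hR : G.IsNClique (k + 1) R) :
    (#A : ℝ) - (k + 1) * #A / (k : ℝ) ^ 2 ≤
      #(A.filter fun x ↦ ∃ w ∈ R, ∀ u ∈ R, u ≠ w → G.Adj u x) := by
  let Misses (p : V × V) (x : V) : Prop := ¬G.Adj p.1 x ∧ ¬G.Adj p.2 x
  set bad := A.filter fun x ↦ ¬∃ w ∈ R, ∀ u ∈ R, u ≠ w → G.Adj u x
  have hpairs : 2 * #bad ≤ ∑ p ∈ R.offDiag, #(A.bipartiteAbove Misses p) := by
    rw [sum_card_bipartiteAbove_eq_sum_card_bipartiteBelow]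
    calc 2 * #bad = ∑ x ∈ bad, 2 := by rw [sum_const, smul_eq_mul, mul_comm]
      _ ≤ ∑ x ∈ bad, #(R.offDiag.bipartiteBelow Misses x) := sum_le_sum fun x hx ↦ ?_
      _ ≤ ∑ x ∈ A, #(R.offDiag.bipartiteBelow Misses x) :=
          sum_le_sum_of_subset (filter_subset _ _)
    obtain ⟨w, hw⟩ : R.Nonempty := card_pos.1 (hR.2 ▸ k.succ_pos)
    simp only [bad, mem_filter, not_exists, not_and, not_forall, exists_prop] at hx
    obtain ⟨a, ha, -, hax⟩ := hx.2 w hw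
    obtain ⟨b, hb, hba, hbx⟩ := hx.2 a ha
    exact one_lt_card.2
      ⟨(a, b), mem_filter.2 ⟨mem_offDiag.2 ⟨ha, hb, Ne.symm hba⟩, hax, hbx⟩,
      (b, a), mem_filter.2 ⟨mem_offDiag.2 ⟨hb, ha, hba⟩, hbx, hax⟩, by simp [hba]⟩
  have hoverlap : (∑ p ∈ R.offDiag, #(A.bipartiteAbove Misses p) : ℝ) ≤
      #R.offDiag * (2 * #A / (k : ℝ) ^ 3) := by
    rw [← nsmul_eq_mul, ← sum_const]
    refine sum_le_sum fun p hp ↦ ?_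
    obtain ⟨h1, h2, hne⟩ := mem_offDiag.1 hp
    exact hA.commonNonNbrs _ (hRA h1) _ (hRA h2) (hR.1 h1 h2 hne)
  have hoff : (#R.offDiag : ℝ) = (k + 1) * k := by simp [card_offDiag_of_card_eq hR.2]
  have hbad : (#bad : ℝ) ≤ (k + 1) * #A / (k : ℝ) ^ 2 := by
    have e : ((k : ℝ) + 1) * k * (2 * #A / (k : ℝ) ^ 3) =
        2 * ((k + 1) * #A / (k : ℝ) ^ 2) := by
      rcases eq_or_ne (k : ℝ) 0 with h | h
      · simp [h]
      · field_simp
    have : (2 * #bad : ℝ) ≤ ∑ p ∈ R.offDiag, (#(A.bipartiteAbove Misses p) : ℝ) := by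
      exact_mod_cast hpairs
    rw [hoff, e] at hoverlap
    linarith
  have hsplit := card_filter_add_card_filter_not (s := A)
    (fun x ↦ ∃ w ∈ R, ∀ u ∈ R, u ≠ w → G.Adj u x)
  have : (#A : ℝ) = _ := congrArg (Nat.cast (R := ℝ)) hsplit.symm
  push_cast at this
  linarith

/-- A vertex `x ∈ A` adjacent to all of `R` but `w` sees the clique `R.erase w` inside
`A ∩ N(x)`, where the inductive hypothesis applies; adding `x` to the cliques found there gives
`(s + 2)`-cliques through the same pairs. -/
lemma mul_cliqueBound_lt_sum_card_cliquesThrough_succ {s : ℕ} (hs : 1 ≤ s)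
    (ih : ∀ A R : Finset V, G.IsDenseAt s A → R ⊆ A → G.IsNClique (s + 1) R →
      (s + 1) * s * cliqueBound s #A ≤
        ∑ p ∈ R.offDiag, (#(G.cliquesThrough A p.1 p.2 (s + 1)) : ℝ))
    {A R : Finset V} (hA : G.IsDenseAt (s + 1) A) (hRA : R ⊆ A) (hR : G.IsNClique (s + 2) R) :
    (s + 2) * (s + 1) * cliqueBound (s + 1) #A <
      ∑ p ∈ R.offDiag, (#(G.cliquesThrough A p.1 p.2 (s + 2)) : ℝ) := by
  obtain ⟨w₀, hw₀⟩ : R.Nonempty := card_pos.1 (hR.2 ▸ (s + 1).succ_pos)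
  have hm : (0 : ℝ) < #A := by exact_mod_cast card_pos.2 ⟨w₀, hRA hw₀⟩
  set good := A.filter fun x ↦ ∃ w ∈ R, ∀ u ∈ R, u ≠ w → G.Adj u x
  have hgood : #A - (s + 2) * #A / ((s : ℝ) + 1) ^ 2 ≤ #good := by
    have := sub_le_card_filter_adj_all_but_one hA hRA hR
    push_cast at this
    rwa [add_assoc, one_add_one_eq_two] at this
  set β := cliqueBound s ((1 - deficit (s + 1)) * #A)
  have hlocal : ∀ x ∈ good, (s + 1) * s * β ≤
      ∑ p ∈ R.offDiag, (#(G.cliquesThrough (A.filter (G.Adj x)) p.1 p.2 (s + 1)) : ℝ) := by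
    intro x hx
    obtain ⟨hxA, w, hw, hadj⟩ := mem_filter.1 hx
    have hR' : G.IsNClique (s + 1) (R.erase w) := hR.erase_of_mem hw
    have hR'A : R.erase w ⊆ A.filter (G.Adj x) := fun u hu ↦ mem_filter.2
      ⟨hRA (mem_of_mem_erase hu), (hadj u (mem_of_mem_erase hu) (ne_of_mem_erase hu)).symm⟩
    calc (s + 1) * s * β ≤ (s + 1) * s * cliqueBound s #(A.filter (G.Adj x)) := by
          gcongr
          exact cliqueBound_mono
            (mul_nonneg (sub_nonneg.2 (deficit_succ_lt_one hs).le) hm.le) (hA.degree x hxA).le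
      _ ≤ _ := ih _ _ (hA.filter_adj hs hxA) hR'A hR'
      _ ≤ _ := sum_le_sum_of_subset_of_nonneg (offDiag_mono (erase_subset _ _))
          fun _ _ _ ↦ Nat.cast_nonneg _
  have htotal := card_mul_le_sum_card_cliquesThrough (filter_subset _ A) hlocal
  rw [Nat.add_sub_cancel] at htotal
  have hs' : (0 : ℝ) < s := by exact_mod_cast hs
  have := add_two_mul_cliqueBound_succ_lt hs hm hgood
  refine lt_of_mul_lt_mul_left ?_ hs'.le
  calc (s : ℝ) * ((s + 2) * (s + 1) * cliqueBound (s + 1) #A)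
      = (s + 1) * s * ((s + 2) * cliqueBound (s + 1) #A) := by ring
    _ < (s + 1) * s * (#good * β) := by gcongr
    _ = #good * ((s + 1) * s * β) := by ring
    _ ≤ _ := htotal

/-- The induction starts at `s = 1`, where the bound only asks for the edge itself; strictness
is recovered from the inductive step in `mul_cliqueBound_lt_sum_card_cliquesThrough`. -/
lemma mul_cliqueBound_le_sum_card_cliquesThrough {s : ℕ} (hs : 1 ≤ s) :
    ∀ A R : Finset V, G.IsDenseAt s A → R ⊆ A → G.IsNClique (s + 1) R →
      (s + 1) * s * cliqueBound s #A ≤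
        ∑ p ∈ R.offDiag, (#(G.cliquesThrough A p.1 p.2 (s + 1)) : ℝ) := by
  induction s, hs using Nat.le_induction with
  | base =>
    intro A R _ hRA hR
    calc ((1 : ℕ) + 1 : ℝ) * (1 : ℕ) * cliqueBound 1 #A = ∑ p ∈ R.offDiag, (1 : ℝ) := by
          simp [cliqueBound, card_offDiag_of_card_eq hR.2]; norm_num
      _ ≤ _ := sum_le_sum fun p hp ↦ by
          obtain ⟨h1, h2, hne⟩ := mem_offDiag.1 hp
          exact_mod_cast one_le_card_cliquesThrough (hR.1 h1 h2 hne) (hRA h1) (hRA h2)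
  | succ s hs ih =>
    intro A R hA hRA hR
    have := mul_cliqueBound_lt_sum_card_cliquesThrough_succ hs ih hA hRA hR
    push_cast
    rw [add_assoc, one_add_one_eq_two]
    exact this.le

lemma mul_cliqueBound_lt_sum_card_cliquesThrough {s : ℕ} (hs : 2 ≤ s) {A R : Finset V}
    (hA : G.IsDenseAt s A) (hRA : R ⊆ A) (hR : G.IsNClique (s + 1) R) :
    (s + 1) * s * cliqueBound s #A <
      ∑ p ∈ R.offDiag, (#(G.cliquesThrough A p.1 p.2 (s + 1)) : ℝ) := by
  obtain ⟨t, rfl⟩ : ∃ t, s = t + 1 := ⟨s - 1, by omega⟩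
  have := mul_cliqueBound_lt_sum_card_cliquesThrough_succ (by omega)
    (mul_cliqueBound_le_sum_card_cliquesThrough (by omega)) hA hRA hR
  push_cast
  rw [add_assoc, one_add_one_eq_two]
  exact this

theorem exists_adj_cliqueBound_lt_of_isDenseAt [Fintype V] {r : ℕ} (hr : 2 ≤ r)
    (hK : ¬G.CliqueFree (r + 1)) (hG : G.IsDenseAt r univ) :
    ∃ u v, G.Adj u v ∧
      cliqueBound r (Fintype.card V) < #(G.cliquesThrough univ u v (r + 1)) := by
  obtain ⟨R, hR⟩ : ∃ R, G.IsNClique (r + 1) R := by simpa [CliqueFree] using hK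
  have h := mul_cliqueBound_lt_sum_card_cliquesThrough hr hG (subset_univ R) hR
  have hoff : (#R.offDiag : ℝ) = (r + 1) * r := by simp [card_offDiag_of_card_eq hR.2]
  rw [card_univ, ← hoff, ← nsmul_eq_mul, ← sum_const] at h
  obtain ⟨p, hp, hlt⟩ := exists_lt_of_sum_lt h
  obtain ⟨h1, h2, hne⟩ := mem_offDiag.1 hp
  exact ⟨p.1, p.2, hR.1 h1 h2 hne, hlt⟩

end SimpleGraph

theorem stmt19 {n : ℕ} (r : ℕ) (hr : 2 ≤ r) (G : SimpleGraph (Fin n)) [DecidableRel G.Adj]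
    (hK : ¬ G.CliqueFree (r + 1))
    (hdel : (1 - 1 / (r : ℝ) - 1 / (r : ℝ) ^ 4) * (n : ℝ) < (G.minDegree : ℝ)) :
    ∃ u v : Fin n, G.Adj u v ∧
      (n : ℝ) ^ (r - 1) / (r : ℝ) ^ (r + 3) <
        ((Finset.univ.filter
          (fun s : Finset (Fin n) => G.IsNClique (r + 1) s ∧ u ∈ s ∧ v ∈ s)).card : ℝ) := by
  have hdeg (w : Fin n) :
      (1 - deficit r) * Fintype.card (Fin n) < #(univ.filter (G.Adj w)) := by
    rw [Fintype.card_fin, ← SimpleGraph.neighborFinset_eq_filter,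
      SimpleGraph.card_neighborFinset_eq_degree, deficit, ← sub_sub]
    exact hdel.trans_le (Nat.cast_le.2 (G.minDegree_le_degree w))
  suffices ∃ u v, G.Adj u v ∧
      cliqueBound r (Fintype.card (Fin n)) < #(G.cliquesThrough univ u v (r + 1)) by
    simpa [cliqueBound, SimpleGraph.cliquesThrough] using this
  by_cases hov : ∀ u ∈ univ, ∀ v ∈ univ, G.Adj u v →
      (#(univ.filter fun x ↦ ¬G.Adj u x ∧ ¬G.Adj v x) : ℝ) ≤
        2 * #(univ : Finset (Fin n)) / r ^ 3
  · refine SimpleGraph.exists_adj_cliqueBound_lt_of_isDenseAt hr hK ⟨fun v _ ↦ ?_, hov⟩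
    simpa using hdeg v
  · simp only [not_forall, not_le, exists_prop, mem_univ, true_and] at hov
    obtain ⟨u, v, huv, hlt⟩ := hov
    exact ⟨u, v, huv, SimpleGraph.cliqueBound_lt_card_cliquesThrough_of_nonNbrs hr hdeg huv
      (by simpa using hlt.le)⟩
end
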